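/- arXiv:2508.03335 — 4 statements merged into one kernel-verified Lean document; each statement's English description precedes it below -/
import Mathlib

section
/- For every real number α ≥ 1 and every forest F with |E(F)| > α, there exists a vertex v ∈ V(F) such that for some set C of v-subtrees of F, α < Σ_{T'∈C} |E(T')| ≤ 2α. -/
open SimpleGraph

def Contains {V W : Type*} (U : SimpleGraph V) (G : SimpleGraph W) : Prop :=
  ∃ f : G →g U, Function.Injective f

def IsWSubtree {V : Type*} (F : SimpleGraph V) (W : Set V) (H : F.Subgraph) : Prop :=
  H.coe.IsTree ∧ (∀ w ∈ W, (H.neighborSet w).Subsingleton) ∧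
    ∀ H' : F.Subgraph, H ≤ H' → H'.coe.IsTree →
      (∀ w ∈ W, (H'.neighborSet w).Subsingleton) → H' = H

noncomputable def ratio (w : ℕ) : ℝ := (2 + (2/3 : ℝ) ^ w) / (1 + (2/3 : ℝ) ^ w)
noncomputable def alphaF (w p : ℕ) : ℝ := (1 / (1 + (2/3 : ℝ) ^ w)) * ratio w ^ (p - 1)
noncomputable def betaF (w : ℕ) : ℝ := 3 * (3/2 : ℝ) ^ w
noncomputable def gammaF (w p : ℕ) : ℝ := ratio w ^ p
noncomputable def deltaF (w : ℕ) : ℝ := (2 + (2/3 : ℝ) ^ w) * betaF w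
noncomputable def pW (w : ℕ) : ℕ := sInf {p : ℕ | betaF w ≤ alphaF w (p + 1)}

noncomputable def betaK (k w : ℕ) : ℝ := (2 * k + 4) * (3/2 : ℝ) ^ w
noncomputable def deltaK (k w : ℕ) : ℝ := (2 + (2/3 : ℝ) ^ w) * betaK k w
noncomputable def pWK (k w : ℕ) : ℕ := sInf {p : ℕ | betaK k w ≤ alphaF w (p + 1)}

def JVert (a b : ℕ) : ℕ → Type
  | 0 => Fin b
  | m + 1 => Fin a ⊕ (JVert a b m ⊕ JVert a b m)

def JGraph (a b : ℕ) : (m : ℕ) → SimpleGraph (JVert a b m)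
  | 0 => ⊤
  | m + 1 => SimpleGraph.fromRel (fun u v =>
      match u, v with
      | Sum.inl _, _ => True
      | Sum.inr (Sum.inl x), Sum.inr (Sum.inl y) => (JGraph a b m).Adj x y
      | Sum.inr (Sum.inr x), Sum.inr (Sum.inr y) => (JGraph a b m).Adj x y
      | _, _ => False)

noncomputable def GwpVert (w p : ℕ) : Type := JVert (w + 1) ⌈deltaF w⌉₊ (p - pW w)
noncomputable def Gwp (w p : ℕ) : SimpleGraph (GwpVert w p) := JGraph _ _ _

noncomputable def GkwpVert (k w p : ℕ) : Type := JVert ((k + 1) * (w + 1)) ⌈deltaK k w⌉₊ (p - pWK k w)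
noncomputable def Gkwp (k w p : ℕ) : SimpleGraph (GkwpVert k w p) := JGraph _ _ _

structure TreeDecomp {V : Type*} {ι : Type*} (G : SimpleGraph V) (T : SimpleGraph ι) where
  isTree : T.IsTree
  bag : ι → Set V
  bag_connected : ∀ v : V, (T.induce {x | v ∈ bag x}).Connected
  bag_edge : ∀ ⦃u v : V⦄, G.Adj u v → ∃ x, u ∈ bag x ∧ v ∈ bag x

def HasTreewidthLE {V : Type*} (G : SimpleGraph V) (k : ℕ) : Prop :=
  ∃ (ι : Type) (T : SimpleGraph ι) (td : TreeDecomp G T), ∀ x, (td.bag x).ncard ≤ k + 1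

namespace ForestAux
attribute [local instance] Classical.propDecidable
variable {V : Type} [Fintype V]
def Fdel (F : SimpleGraph V) (v : V) : SimpleGraph V where
  Adj a b := F.Adj a b ∧ a ≠ v ∧ b ≠ v
  symm := ⟨fun a b ⟨h, ha, hb⟩ => ⟨h.symm, hb, ha⟩⟩
  loopless := ⟨fun a ⟨h, _, _⟩ => F.irrefl h⟩
variable {F : SimpleGraph V}
lemma fdel_le (F : SimpleGraph V) (v : V) : Fdel F v ≤ F := fun _ _ h => h.1
lemma fdel_support_ne {v x y : V} (p : (Fdel F v).Walk x y) (hx : x ≠ v) :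
    ∀ z ∈ p.support, z ≠ v := by
  induction p with
  | nil => intro z hz; rw [SimpleGraph.Walk.support_nil] at hz; simp at hz; subst hz; exact hx
  | @cons a b c h p ih =>
    intro z hz
    rw [SimpleGraph.Walk.support_cons] at hz
    rcases List.mem_cons.mp hz with rfl | hz
    · exact hx
    · exact ih h.2.2 z hz
lemma reachable_isolated {v y : V} (h : (Fdel F v).Reachable v y) : y = v := by
  obtain ⟨p⟩ := h
  cases p with
  | nil => rfl
  | cons h p => exact absurd rfl h.2.1
lemma mem_supp_of_fdel_adj {v x y : V} {c : (Fdel F v).ConnectedComponent}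
    (hx : x ∈ c.supp) (h : (Fdel F v).Adj x y) : y ∈ c.supp := by
  rw [ConnectedComponent.mem_supp_iff] at hx ⊢
  rw [← hx]; exact ConnectedComponent.sound h.symm.reachable
lemma good_mk {v y : V} (hy : y ≠ v) : v ∉ ((Fdel F v).connectedComponentMk y).supp := by
  intro h
  rw [ConnectedComponent.mem_supp_iff] at h
  exact hy (reachable_isolated (ConnectedComponent.exact h))
lemma reachable_fdel_of_walk {u x y : V} (p : F.Walk x y) (h : u ∉ p.support) :
    (Fdel F u).Reachable x y := by
  induction p with
  | nil => exact Reachable.refl _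
  | @cons a b c hab p ih =>
    rw [SimpleGraph.Walk.support_cons, List.mem_cons] at h
    push_neg at h
    have hadj : (Fdel F u).Adj a b :=
      ⟨hab, fun hh => h.1 hh.symm, fun hh => (h.2 (hh ▸ p.start_mem_support))⟩
    exact hadj.reachable.trans (ih h.2)
lemma reachable_fdel_trans {u v x y : V} (p : (Fdel F u).Walk x y) (h : v ∉ p.support) :
    (Fdel F v).Reachable x y := by
  induction p with
  | nil => exact Reachable.refl _
  | @cons a b c hab p ih =>
    rw [SimpleGraph.Walk.support_cons, List.mem_cons] at h
    push_neg at h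
    have hadj : (Fdel F v).Adj a b :=
      ⟨hab.1, fun hh => h.1 hh.symm, fun hh => (h.2 (hh ▸ p.start_mem_support))⟩
    exact hadj.reachable.trans (ih h.2)
def Sset (F : SimpleGraph V) (v : V) (c : (Fdel F v).ConnectedComponent) : Set V :=
  c.supp ∪ {y | y = v ∧ ∃ u, u ∈ c.supp ∧ F.Adj v u}
def Tsub (F : SimpleGraph V) (v : V) (c : (Fdel F v).ConnectedComponent) : F.Subgraph :=
  (⊤ : F.Subgraph).induce (Sset F v c)
lemma tsub_verts {v : V} (c : (Fdel F v).ConnectedComponent) :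
    (Tsub F v c).verts = Sset F v c := rfl
lemma tsub_adj {v : V} {c : (Fdel F v).ConnectedComponent} {a b : V} :
    (Tsub F v c).Adj a b ↔ a ∈ Sset F v c ∧ b ∈ Sset F v c ∧ F.Adj a b := by
  rw [Tsub, Subgraph.induce_adj, Subgraph.top_adj]
lemma mem_sset {v : V} {c : (Fdel F v).ConnectedComponent} {x : V} :
    x ∈ Sset F v c ↔ x ∈ c.supp ∨ (x = v ∧ ∃ u, u ∈ c.supp ∧ F.Adj v u) := Iff.rfl
lemma mem_supp_of_mem_sset {v : V} {c : (Fdel F v).ConnectedComponent} {x : V}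
    (hx : x ∈ Sset F v c) (hxv : x ≠ v) : x ∈ c.supp := by
  rcases hx with h | ⟨rfl, _⟩
  · exact h
  · exact absurd rfl hxv

-- ### tree structure

lemma lift_reach {v : V} {c : (Fdel F v).ConnectedComponent} {x y : V}
    (p : (Fdel F v).Walk x y) (hx : x ∈ c.supp) (hy : y ∈ c.supp) :
    (Tsub F v c).coe.Reachable ⟨x, Or.inl hx⟩ ⟨y, Or.inl hy⟩ := by
  induction p with
  | nil => exact Reachable.refl _
  | @cons a b d h p ih =>
    have hb : b ∈ c.supp := mem_supp_of_fdel_adj hx h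
    have hadj : (Tsub F v c).coe.Adj ⟨a, Or.inl hx⟩ ⟨b, Or.inl hb⟩ := by
      rw [Subgraph.coe_adj]
      exact tsub_adj.mpr ⟨Or.inl hx, Or.inl hb, h.1⟩
    exact hadj.reachable.trans (ih hb hy)

lemma reach_to_rep {v : V} {c : (Fdel F v).ConnectedComponent} {r : V} (hr : r ∈ c.supp)
    (x : V) (hx : x ∈ Sset F v c) :
    (Tsub F v c).coe.Reachable ⟨x, hx⟩ ⟨r, Or.inl hr⟩ := by
  rcases hx with hx' | ⟨hxv, u, hu, hadj⟩
  · have : (Fdel F v).Reachable x r := by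
      rw [ConnectedComponent.mem_supp_iff] at hx' hr
      exact ConnectedComponent.exact (hx'.trans hr.symm)
    obtain ⟨p⟩ := this
    exact lift_reach p hx' hr
  · have hvS : x ∈ Sset F v c := Or.inr ⟨hxv, u, hu, hadj⟩
    have hadj' : (Tsub F v c).coe.Adj ⟨x, hvS⟩ ⟨u, Or.inl hu⟩ := by
      rw [Subgraph.coe_adj]
      exact tsub_adj.mpr ⟨hvS, Or.inl hu, hxv ▸ hadj⟩
    refine hadj'.reachable.trans ?_
    have : (Fdel F v).Reachable u r := by
      rw [ConnectedComponent.mem_supp_iff] at hu hr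
      exact ConnectedComponent.exact (hu.trans hr.symm)
    obtain ⟨p⟩ := this
    exact lift_reach p hu hr

lemma tsub_connected {v : V} (c : (Fdel F v).ConnectedComponent) :
    (Tsub F v c).coe.Connected := by
  obtain ⟨r, hr⟩ := c.exists_rep
  have hr' : r ∈ c.supp := by rw [ConnectedComponent.mem_supp_iff]; exact hr
  haveI : Nonempty (↥(Tsub F v c).verts) := ⟨⟨r, Or.inl hr'⟩⟩
  refine ⟨?_⟩
  rintro ⟨a, ha⟩ ⟨b, hb⟩
  exact (reach_to_rep hr' a ha).trans (reach_to_rep hr' b hb).symm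

lemma subgraph_acyclic (hF : F.IsAcyclic) (H : F.Subgraph) : H.coe.IsAcyclic := by
  intro x p hp
  exact hF (p.map H.hom) (hp.map Subtype.val_injective)

lemma tsub_nbhd (hF : F.IsAcyclic) {v : V} {c : (Fdel F v).ConnectedComponent}
    (hv : v ∉ c.supp) : ((Tsub F v c).neighborSet v).Subsingleton := by
  intro y₁ h₁ y₂ h₂
  replace h₁ : (Tsub F v c).Adj v y₁ := h₁
  replace h₂ : (Tsub F v c).Adj v y₂ := h₂
  rw [tsub_adj] at h₁ h₂
  obtain ⟨-, hy₁S, hadj₁⟩ := h₁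
  obtain ⟨-, hy₂S, hadj₂⟩ := h₂
  have hy₁v : y₁ ≠ v := hadj₁.ne'
  have hy₂v : y₂ ≠ v := hadj₂.ne'
  have hy₁ : y₁ ∈ c.supp := mem_supp_of_mem_sset hy₁S hy₁v
  have hy₂ : y₂ ∈ c.supp := mem_supp_of_mem_sset hy₂S hy₂v
  by_contra hne
  -- a (Fdel v)-walk from y₁ to y₂
  have hreach : (Fdel F v).Reachable y₁ y₂ := by
    rw [ConnectedComponent.mem_supp_iff] at hy₁ hy₂
    exact ConnectedComponent.exact (hy₁.trans hy₂.symm)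
  obtain ⟨w⟩ := hreach
  set p0 := (w.toPath : (Fdel F v).Walk y₁ y₂) with hp0
  have hp0path : p0.IsPath := w.toPath.2
  have hp0sup : ∀ z ∈ p0.support, z ≠ v := fun z hz =>
    fdel_support_ne w hy₁v z (Walk.support_toPath_subset w hz)
  have hedges : ∀ e ∈ p0.edges, e ∈ F.edgeSet := fun e he =>
    edgeSet_mono (fdel_le F v) (p0.edges_subset_edgeSet he)
  set q := p0.transfer F hedges with hq
  have hqsup : q.support = p0.support := Walk.support_transfer _ _
  have hqpath : q.IsPath := hp0path.transfer hedges
  have hvq : v ∉ q.support := by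
    rw [hqsup]; intro hv'; exact hp0sup v hv' rfl
  have huniq := isAcyclic_iff_path_unique.mp hF (Path.singleton hadj₂)
    ⟨Walk.cons hadj₁ q, (Walk.cons_isPath_iff _ _).mpr ⟨hqpath, hvq⟩⟩
  have hsup := congrArg (fun (P : F.Path v y₂) => (P : F.Walk v y₂).support) huniq
  simp only [Path.singleton, Walk.support_cons, Walk.support_nil] at hsup
  -- hsup : [v, y₂] = v :: q.support
  have : q.support = [y₂] := by
    injection hsup with _ h2
    exact h2.symm
  have h3 := q.support_eq_cons
  rw [this] at h3
  injection h3 with h4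
  exact hne h4.symm

lemma tsub_maximal {v : V} {c : (Fdel F v).ConnectedComponent} (hv : v ∉ c.supp)
    (H' : F.Subgraph) (hle : Tsub F v c ≤ H') (htree : H'.coe.IsTree)
    (hnb : (H'.neighborSet v).Subsingleton) : H' = Tsub F v c := by
  have step : ∀ a b : V, a ∈ Sset F v c → H'.Adj a b → b ∈ Sset F v c := by
    intro a b ha hab
    have hFab : F.Adj a b := hab.adj_sub
    rcases ha with hsupp | ⟨hav, u₀, hu₀, hadj₀⟩
    · by_cases hbv : b = v
      · exact Or.inr ⟨hbv, a, hsupp, hbv ▸ hFab.symm⟩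
      · have hanv : a ≠ v := fun h => hv (h ▸ hsupp)
        exact Or.inl (mem_supp_of_fdel_adj hsupp ⟨hFab, hanv, hbv⟩)
    · have hT : (Tsub F v c).Adj a u₀ :=
        tsub_adj.mpr ⟨Or.inr ⟨hav, u₀, hu₀, hadj₀⟩, Or.inl hu₀, hav ▸ hadj₀⟩
      have hH : H'.Adj a u₀ := hle.2 hT
      have hb : b = u₀ := hnb (show H'.Adj v b from hav ▸ hab) (show H'.Adj v u₀ from hav ▸ hH)
      exact hb ▸ Or.inl hu₀
  obtain ⟨r, hrc⟩ := c.exists_rep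
  have hr : r ∈ c.supp := by rw [ConnectedComponent.mem_supp_iff]; exact hrc
  have hrS : r ∈ Sset F v c := Or.inl hr
  have hrH : r ∈ H'.verts := hle.1 hrS
  have hwalk : ∀ {s t : ↥H'.verts} (p : H'.coe.Walk s t), (s : V) ∈ Sset F v c →
      (t : V) ∈ Sset F v c := by
    intro s t p
    induction p with
    | nil => exact id
    | @cons a b d h p ih =>
      intro ha
      exact ih (step a b ha ((Subgraph.coe_adj H' a b) ▸ h))
  have hverts : H'.verts = Sset F v c := by
    apply Set.Subset.antisymm
    · intro x hx
      obtain ⟨p⟩ := htree.isConnected.preconnected ⟨r, hrH⟩ ⟨x, hx⟩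
      exact hwalk p hrS
    · exact hle.1
  refine Subgraph.ext hverts ?_
  funext a b
  refine propext ⟨fun h => ?_, fun h => hle.2 h⟩
  exact tsub_adj.mpr ⟨hverts ▸ h.fst_mem, hverts ▸ h.snd_mem, h.adj_sub⟩

lemma isWSubtree_tsub (hF : F.IsAcyclic) {v : V} {c : (Fdel F v).ConnectedComponent}
    (hv : v ∉ c.supp) : IsWSubtree F {v} (Tsub F v c) := by
  refine ⟨⟨tsub_connected c, subgraph_acyclic hF _⟩, ?_, ?_⟩
  · intro w hw
    rw [Set.mem_singleton_iff] at hw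
    subst hw
    exact tsub_nbhd hF hv
  · intro H' h1 h2 h3
    exact tsub_maximal hv H' h1 h2 (h3 v rfl)

-- ### counting

noncomputable instance fintypeComp (F : SimpleGraph V) (v : V) :
    Fintype ((Fdel F v).ConnectedComponent) :=
  @Fintype.ofFinite _ (Quot.finite _)

noncomputable def En (F : SimpleGraph V) (v : V) (c : (Fdel F v).ConnectedComponent) :
    Finset (Sym2 V) := ((Tsub F v c).edgeSet).toFinite.toFinset

lemma mem_En {v : V} {c : (Fdel F v).ConnectedComponent} {e : Sym2 V} :
    e ∈ En F v c ↔ e ∈ (Tsub F v c).edgeSet := Set.Finite.mem_toFinset _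

lemma ncard_eq_En {v : V} (c : (Fdel F v).ConnectedComponent) :
    (Tsub F v c).edgeSet.ncard = (En F v c).card := Set.ncard_eq_toFinset_card _ _

lemma En_subset {v : V} {c : (Fdel F v).ConnectedComponent} {e : Sym2 V}
    (he : e ∈ En F v c) : e ∈ F.edgeSet :=
  (Tsub F v c).edgeSet_subset (mem_En.mp he)

lemma exists_class {v : V} {e : Sym2 V} (he : e ∈ F.edgeSet) :
    ∃ c : (Fdel F v).ConnectedComponent, v ∉ c.supp ∧ e ∈ En F v c := by
  induction e with
  | _ x y =>
    rw [mem_edgeSet] at he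
    by_cases hxv : x = v
    · subst hxv
      have hyx : y ≠ x := he.ne'
      refine ⟨(Fdel F x).connectedComponentMk y, good_mk hyx, ?_⟩
      rw [mem_En, Subgraph.mem_edgeSet, tsub_adj]
      have hy : y ∈ ((Fdel F x).connectedComponentMk y).supp := by
        rw [ConnectedComponent.mem_supp_iff]
      exact ⟨Or.inr ⟨rfl, y, hy, he⟩, Or.inl hy, he⟩
    · by_cases hyv : y = v
      · subst hyv
        refine ⟨(Fdel F y).connectedComponentMk x, good_mk hxv, ?_⟩
        rw [mem_En, Subgraph.mem_edgeSet, tsub_adj]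
        have hx : x ∈ ((Fdel F y).connectedComponentMk x).supp := by
          rw [ConnectedComponent.mem_supp_iff]
        exact ⟨Or.inl hx, Or.inr ⟨rfl, x, hx, he.symm⟩, he⟩
      · refine ⟨(Fdel F v).connectedComponentMk x, good_mk hxv, ?_⟩
        rw [mem_En, Subgraph.mem_edgeSet, tsub_adj]
        have hx : x ∈ ((Fdel F v).connectedComponentMk x).supp := by
          rw [ConnectedComponent.mem_supp_iff]
        have hy : y ∈ ((Fdel F v).connectedComponentMk x).supp :=
          mem_supp_of_fdel_adj hx ⟨he, hxv, hyv⟩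
        exact ⟨Or.inl hx, Or.inl hy, he⟩

lemma En_disjoint {v : V} {c c' : (Fdel F v).ConnectedComponent} (h : c ≠ c') :
    Disjoint (En F v c) (En F v c') := by
  rw [Finset.disjoint_left]
  intro e he he'
  rw [mem_En] at he he'
  induction e with
  | _ x y =>
    rw [Subgraph.mem_edgeSet, tsub_adj] at he he'
    obtain ⟨hx, hy, hadj⟩ := he
    obtain ⟨hx', hy', -⟩ := he'
    have key : ∀ z : V, z ≠ v → z ∈ Sset F v c → z ∈ Sset F v c' → False := by
      intro z hz h1 h2
      have m1 := mem_supp_of_mem_sset h1 hz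
      have m2 := mem_supp_of_mem_sset h2 hz
      rw [ConnectedComponent.mem_supp_iff] at m1 m2
      exact h (m1 ▸ m2.symm ▸ rfl)
    by_cases hxv : x = v
    · have hyv : y ≠ v := by
        intro hh
        rw [hxv, hh] at hadj
        exact F.irrefl hadj
      exact key y hyv hy hy'
    · exact key x hxv hx hx'

noncomputable def allC (F : SimpleGraph V) (v : V) : Finset ((Fdel F v).ConnectedComponent) :=
  Finset.univ.filter (fun c => v ∉ c.supp)

lemma mem_allC {v : V} {c : (Fdel F v).ConnectedComponent} :
    c ∈ allC F v ↔ v ∉ c.supp := by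
  rw [allC, Finset.mem_filter]
  exact ⟨fun h => h.2, fun h => ⟨Finset.mem_univ _, h⟩⟩

lemma total_card (F : SimpleGraph V) (v : V) :
    F.edgeSet.ncard = ∑ c ∈ allC F v, (En F v c).card := by
  have hbu : F.edgeSet.toFinite.toFinset = (allC F v).biUnion (En F v) := by
    ext e
    rw [Set.Finite.mem_toFinset, Finset.mem_biUnion]
    constructor
    · intro he
      obtain ⟨c, hc, hec⟩ := exists_class (v := v) he
      exact ⟨c, mem_allC.mpr hc, hec⟩
    · rintro ⟨c, -, hec⟩
      exact En_subset hec
  rw [Set.ncard_eq_toFinset_card _ F.edgeSet.toFinite, hbu,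
    Finset.card_biUnion (fun x _ y _ hxy => En_disjoint hxy)]

lemma tsub_inj {v : V} {c₁ c₂ : (Fdel F v).ConnectedComponent}
    (h1 : v ∉ c₁.supp) (h : Tsub F v c₁ = Tsub F v c₂) : c₁ = c₂ := by
  obtain ⟨r, hrc⟩ := c₁.exists_rep
  have hr : r ∈ c₁.supp := by rw [ConnectedComponent.mem_supp_iff]; exact hrc
  have hrv : r ≠ v := fun hh => h1 (hh ▸ hr)
  have hrS : r ∈ Sset F v c₂ := by
    rw [← tsub_verts, ← h, tsub_verts]
    exact Or.inl hr
  have hr2 := mem_supp_of_mem_sset hrS hrv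
  rw [ConnectedComponent.mem_supp_iff] at hr hr2
  exact hr ▸ hr2.symm ▸ rfl

lemma reach_of_supp {G : SimpleGraph V} {c : G.ConnectedComponent} {a b : V}
    (ha : a ∈ c.supp) (hb : b ∈ c.supp) : G.Reachable a b := by
  rw [ConnectedComponent.mem_supp_iff] at ha hb
  exact ConnectedComponent.exact (ha.trans hb.symm)

lemma mem_supp_of_reach {G : SimpleGraph V} {c : G.ConnectedComponent} {a b : V}
    (ha : a ∈ c.supp) (h : G.Reachable a b) : b ∈ c.supp := by
  rw [ConnectedComponent.mem_supp_iff] at ha ⊢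
  rw [← ha]
  exact ConnectedComponent.sound h.symm

noncomputable def meas (F : SimpleGraph V) (v : V) (c : (Fdel F v).ConnectedComponent) : ℕ :=
  2 * (En F v c).card + (if ∃ w ∈ c.supp, F.Adj v w then 0 else 1)

lemma rec_step (hF : F.IsAcyclic) (v : V) (c : (Fdel F v).ConnectedComponent)
    (hv : v ∉ c.supp) (h1 : (En F v c).Nonempty) :
    ∃ (u : V) (Z : Finset ((Fdel F u).ConnectedComponent)),
      (∀ c' ∈ Z, u ∉ c'.supp) ∧
      (En F v c).card ≤ (∑ c' ∈ Z, (En F u c').card) + 1 ∧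
      (∀ c' ∈ Z, meas F u c' < meas F v c) := by
  by_cases hroot : ∃ w ∈ c.supp, F.Adj v w
  · -- Case A : the subtree is a branch rooted at v via u
    obtain ⟨u, hu, hadj⟩ := hroot
    have huv : u ≠ v := fun h => hv (h ▸ hu)
    set target := (En F v c).erase s(u,v) with htarget
    set Z := (allC F u).filter (fun c' => ((En F u c') ∩ target).Nonempty) with hZ
    have hgood : ∀ c' ∈ Z, u ∉ c'.supp := fun c' hc' =>
      mem_allC.mp (Finset.mem_filter.mp hc').1
    have hkey : ∀ c' ∈ Z, En F u c' ⊆ target := by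
      intro c' hc'
      have hgc' : u ∉ c'.supp := hgood c' hc'
      obtain ⟨e₀, he₀⟩ := (Finset.mem_filter.mp hc').2
      rw [Finset.mem_inter] at he₀
      obtain ⟨he₀1, he₀2⟩ := he₀
      rw [htarget, Finset.mem_erase] at he₀2
      obtain ⟨hne, hmem⟩ := he₀2
      -- extract a common vertex a₀
      have ha₀ : ∃ a₀, a₀ ∈ c'.supp ∧ a₀ ∈ c.supp ∧ a₀ ≠ u ∧ a₀ ≠ v := by
        clear hc'
        induction e₀ with
        | _ x y =>
          rw [mem_En, Subgraph.mem_edgeSet, tsub_adj] at he₀1 hmem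
          obtain ⟨hxS', hyS', hadjxy⟩ := he₀1
          obtain ⟨hxS, hyS, -⟩ := hmem
          have hPxy : (x ≠ u ∧ x ≠ v) ∨ (y ≠ u ∧ y ≠ v) := by
            by_cases hxu : x = u
            · right
              constructor
              · intro h; rw [hxu, h] at hadjxy; exact F.irrefl hadjxy
              · intro h; exact hne (by rw [hxu, h])
            · by_cases hxv : x = v
              · right
                constructor
                · intro h; apply hne; rw [hxv, h, Sym2.eq_swap]
                · intro h; rw [hxv, h] at hadjxy; exact F.irrefl hadjxy
              · left; exact ⟨hxu, hxv⟩
          rcases hPxy with ⟨hxu, hxv⟩ | ⟨hyu, hyv⟩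
          · exact ⟨x, mem_supp_of_mem_sset hxS' hxu, mem_supp_of_mem_sset hxS hxv, hxu, hxv⟩
          · exact ⟨y, mem_supp_of_mem_sset hyS' hyu, mem_supp_of_mem_sset hyS hyv, hyu, hyv⟩
      obtain ⟨a₀, hac', hac, hau, hav⟩ := ha₀
      -- Claim 1 : v is not in c'
      have hvc' : v ∉ c'.supp := by
        intro hvc'
        obtain ⟨W⟩ : (Fdel F u).Reachable v a₀ := reach_of_supp hvc' hac'
        set p0 := (W.toPath : (Fdel F u).Walk v a₀) with hp0
        have hp0sup : ∀ z ∈ p0.support, z ≠ u := fun z hz =>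
          fdel_support_ne W huv.symm z (Walk.support_toPath_subset W hz)
        have hedges : ∀ e ∈ p0.edges, e ∈ F.edgeSet := fun e he =>
          edgeSet_mono (fdel_le F u) (p0.edges_subset_edgeSet he)
        set q2 := p0.transfer F hedges with hq2
        have hq2path : q2.IsPath := (W.toPath.2).transfer hedges
        have hu2 : u ∉ q2.support := by
          rw [hq2, Walk.support_transfer]
          intro hh; exact hp0sup u hh rfl
        obtain ⟨W1⟩ : (Fdel F v).Reachable u a₀ := reach_of_supp hu hac
        set p1 := (W1.toPath : (Fdel F v).Walk u a₀) with hp1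
        have hp1sup : ∀ z ∈ p1.support, z ≠ v := fun z hz =>
          fdel_support_ne W1 huv z (Walk.support_toPath_subset W1 hz)
        have hedges1 : ∀ e ∈ p1.edges, e ∈ F.edgeSet := fun e he =>
          edgeSet_mono (fdel_le F v) (p1.edges_subset_edgeSet he)
        set q1 := p1.transfer F hedges1 with hq1
        have hq1path : q1.IsPath := (W1.toPath.2).transfer hedges1
        have hvq1 : v ∉ q1.support := by
          rw [hq1, Walk.support_transfer]
          intro hh; exact hp1sup v hh rfl
        have hP1path : (Walk.cons hadj q1).IsPath :=
          (Walk.cons_isPath_iff _ _).mpr ⟨hq1path, hvq1⟩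
        have hP1memu : u ∈ (Walk.cons hadj q1).support := by
          rw [Walk.support_cons]
          exact List.mem_cons_of_mem _ q1.start_mem_support
        have huniq := isAcyclic_iff_path_unique.mp hF
          (⟨Walk.cons hadj q1, hP1path⟩ : F.Path v a₀) ⟨q2, hq2path⟩
        have hsupeq : (Walk.cons hadj q1).support = q2.support :=
          congrArg (fun P : F.Path v a₀ => (P : F.Walk v a₀).support) huniq
        exact hu2 (hsupeq ▸ hP1memu)
      -- Claim 2 : c' ⊆ c
      have hsub : c'.supp ⊆ c.supp := by
        intro z hz
        obtain ⟨W2⟩ : (Fdel F u).Reachable a₀ z := reach_of_supp hac' hz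
        have hvW : v ∉ W2.support := by
          intro hvW
          exact hvc' (mem_supp_of_reach hac' ⟨W2.takeUntil v hvW⟩)
        exact mem_supp_of_reach hac (reachable_fdel_trans W2 hvW)
      -- Claim 3 : edges of the u-subtree of c' lie in target
      intro e he
      induction e with
      | _ p q =>
        rw [mem_En, Subgraph.mem_edgeSet, tsub_adj] at he
        obtain ⟨hpS, hqS, hadjpq⟩ := he
        have hmem : ∀ z, z ∈ Sset F u c' → z ∈ Sset F v c := by
          rintro z (hz | ⟨hzu, -⟩)
          · exact Or.inl (hsub hz)
          · exact Or.inl (hzu ▸ hu)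
        have hvnS : v ∉ Sset F u c' := by
          rintro (hv' | ⟨hvu, -⟩)
          · exact hvc' hv'
          · exact huv hvu.symm
        have hne' : s(p,q) ≠ s(u,v) := by
          intro hh
          rcases Sym2.eq_iff.mp hh with ⟨h1, h2⟩ | ⟨h1, h2⟩
          · exact hvnS (h2 ▸ hqS)
          · exact hvnS (h1 ▸ hpS)
        rw [htarget, Finset.mem_erase]
        exact ⟨hne', mem_En.mpr (Subgraph.mem_edgeSet.mpr
          (tsub_adj.mpr ⟨hmem p hpS, hmem q hqS, hadjpq⟩))⟩
    -- biUnion over Z equals target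
    have hbu : Z.biUnion (En F u) = target := by
      apply Finset.Subset.antisymm
      · intro e he
        rw [Finset.mem_biUnion] at he
        obtain ⟨c', hc', hec'⟩ := he
        exact hkey c' hc' hec'
      · intro e he
        have heF : e ∈ F.edgeSet := En_subset (Finset.mem_of_mem_erase he)
        obtain ⟨c'', hg, he''⟩ := exists_class (v := u) heF
        rw [Finset.mem_biUnion]
        exact ⟨c'', Finset.mem_filter.mpr ⟨mem_allC.mpr hg,
          ⟨e, Finset.mem_inter.mpr ⟨he'', he⟩⟩⟩, he''⟩
    have hsum : ∑ c' ∈ Z, (En F u c').card = target.card := by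
      rw [← hbu, Finset.card_biUnion (fun x _ y _ h => En_disjoint h)]
    have huvE : s(u,v) ∈ En F v c := mem_En.mpr (Subgraph.mem_edgeSet.mpr
      (tsub_adj.mpr ⟨Or.inl hu, Or.inr ⟨rfl, u, hu, hadj⟩, hadj.symm⟩))
    have htc : target.card = (En F v c).card - 1 := Finset.card_erase_of_mem huvE
    have hcard1 : 1 ≤ (En F v c).card := Finset.card_pos.mpr h1
    refine ⟨u, Z, hgood, by omega, ?_⟩
    intro c' hc'
    have h5 : (En F u c').card ≤ target.card := Finset.card_le_card (hkey c' hc')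
    have hmv : meas F v c = 2 * (En F v c).card := by
      rw [meas, if_pos ⟨u, hu, hadj⟩]
      omega
    have hmu : meas F u c' ≤ 2 * (En F u c').card + 1 := by
      rw [meas]; split_ifs <;> omega
    omega
  · -- Case B : the subtree is a component not containing v
    obtain ⟨e₀, he₀⟩ := h1
    have hex : ∃ x y, s(x,y) ∈ En F v c := by
      clear hv
      induction e₀ with
      | _ x y => exact ⟨x, y, he₀⟩
    obtain ⟨x₀, y₀, he₀'⟩ := hex
    rw [mem_En, Subgraph.mem_edgeSet, tsub_adj] at he₀'
    obtain ⟨hxS, hyS, hadj₀⟩ := he₀'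
    have hSsupp : ∀ z, z ∈ Sset F v c → z ∈ c.supp := by
      rintro z (hz | ⟨rfl, w, hw, hvw⟩)
      · exact hz
      · exact absurd ⟨w, hw, hvw⟩ hroot
    have hu : x₀ ∈ c.supp := hSsupp _ hxS
    have hclose : ∀ z w, z ∈ c.supp → F.Adj z w → w ∈ c.supp := by
      intro z w hz hzw
      have hwv : w ≠ v := fun hh => hroot ⟨z, hz, by rw [← hh]; exact hzw.symm⟩
      have hzv : z ≠ v := fun hh => hv (hh ▸ hz)
      exact mem_supp_of_fdel_adj hz ⟨hzw, hzv, hwv⟩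
    have hwalkclose : ∀ {a b : V} (p : F.Walk a b), a ∈ c.supp → b ∈ c.supp := by
      intro a b p
      induction p with
      | nil => exact id
      | @cons a' b' d h p ih => exact fun ha => ih (hclose _ _ ha h)
    set Z := (allC F x₀).filter (fun c' => ((En F x₀ c') ∩ (En F v c)).Nonempty) with hZ
    have hgood : ∀ c' ∈ Z, x₀ ∉ c'.supp := fun c' hc' =>
      mem_allC.mp (Finset.mem_filter.mp hc').1
    -- common vertex for each class
    have hcommon : ∀ c' ∈ Z, ∃ a₀, a₀ ∈ c'.supp ∧ a₀ ∈ c.supp := by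
      intro c' hc'
      have hgc' : x₀ ∉ c'.supp := hgood c' hc'
      obtain ⟨e₁, he₁⟩ := (Finset.mem_filter.mp hc').2
      rw [Finset.mem_inter] at he₁
      obtain ⟨he₁1, he₁2⟩ := he₁
      clear hc'
      induction e₁ with
      | _ x y =>
        rw [mem_En, Subgraph.mem_edgeSet, tsub_adj] at he₁1 he₁2
        obtain ⟨hxS', hyS', hadjxy⟩ := he₁1
        obtain ⟨hxSc, hySc, -⟩ := he₁2
        rcases hxS' with hx' | ⟨hxu, -⟩
        · exact ⟨x, hx', hSsupp _ hxSc⟩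
        · rcases hyS' with hy' | ⟨hyu, -⟩
          · exact ⟨y, hy', hSsupp _ hySc⟩
          · rw [hxu, hyu] at hadjxy
            exact absurd hadjxy F.irrefl
    have hsub : ∀ c' ∈ Z, c'.supp ⊆ c.supp := by
      intro c' hc' z hz
      obtain ⟨a₀, hac', hac⟩ := hcommon c' hc'
      obtain ⟨W⟩ : (Fdel F x₀).Reachable a₀ z := reach_of_supp hac' hz
      have hedges : ∀ e ∈ W.edges, e ∈ F.edgeSet := fun e he =>
        edgeSet_mono (fdel_le F x₀) (W.edges_subset_edgeSet he)
      exact hwalkclose (W.transfer F hedges) hac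
    have hkey : ∀ c' ∈ Z, En F x₀ c' ⊆ En F v c := by
      intro c' hc' e he
      induction e with
      | _ p q =>
        rw [mem_En, Subgraph.mem_edgeSet, tsub_adj] at he ⊢
        obtain ⟨hpS, hqS, hadjpq⟩ := he
        have hmem : ∀ z, z ∈ Sset F x₀ c' → z ∈ Sset F v c := by
          rintro z (hz | ⟨hzu, -⟩)
          · exact Or.inl (hsub c' hc' hz)
          · exact Or.inl (hzu ▸ hu)
        exact ⟨hmem p hpS, hmem q hqS, hadjpq⟩
    have hroot' : ∀ c' ∈ Z, ∃ w ∈ c'.supp, F.Adj x₀ w := by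
      intro c' hc'
      obtain ⟨a₀, hac', hac⟩ := hcommon c' hc'
      have hne : a₀ ≠ x₀ := fun hh => (hgood c' hc') (hh ▸ hac')
      have hreach : F.Reachable x₀ a₀ :=
        (reach_of_supp hu hac : (Fdel F v).Reachable x₀ a₀).mono (fdel_le F v)
      obtain ⟨W⟩ := hreach
      set P := W.toPath with hPdef
      obtain ⟨w, hxw, q, hqp, hqs⟩ : ∃ w, F.Adj x₀ w ∧ ∃ q : F.Walk w a₀,
          q.IsPath ∧ x₀ ∉ q.support := by
        cases hPP : (P : F.Walk x₀ a₀) with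
        | nil => exact absurd rfl hne.symm
        | cons hxw q =>
          have := P.2
          rw [hPP, Walk.cons_isPath_iff] at this
          exact ⟨_, hxw, q, this.1, this.2⟩
      have : (Fdel F x₀).Reachable w a₀ := reachable_fdel_of_walk q hqs
      exact ⟨w, mem_supp_of_reach hac' this.symm, hxw⟩
    have hbu : Z.biUnion (En F x₀) = En F v c := by
      apply Finset.Subset.antisymm
      · intro e he
        rw [Finset.mem_biUnion] at he
        obtain ⟨c', hc', hec'⟩ := he
        exact hkey c' hc' hec'
      · intro e he
        have heF : e ∈ F.edgeSet := En_subset he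
        obtain ⟨c'', hg, he''⟩ := exists_class (v := x₀) heF
        rw [Finset.mem_biUnion]
        exact ⟨c'', Finset.mem_filter.mpr ⟨mem_allC.mpr hg,
          ⟨e, Finset.mem_inter.mpr ⟨he'', he⟩⟩⟩, he''⟩
    have hsum : ∑ c' ∈ Z, (En F x₀ c').card = (En F v c).card := by
      rw [← hbu, Finset.card_biUnion (fun x _ y _ h => En_disjoint h)]
    refine ⟨x₀, Z, hgood, by omega, ?_⟩
    intro c' hc'
    have h5 : (En F x₀ c').card ≤ (En F v c).card := Finset.card_le_card (hkey c' hc')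
    have hmv : meas F v c = 2 * (En F v c).card + 1 := by
      rw [meas, if_neg hroot]
    have hmu : meas F x₀ c' = 2 * (En F x₀ c').card := by
      rw [meas, if_pos (hroot' c' hc')]
      omega
    omega

lemma greedy {ι : Type} (α : ℝ) (hα : 1 ≤ α) (f : ι → ℕ) :
    ∀ (s : Finset ι), (∀ i ∈ s, (f i : ℝ) ≤ α) → α < ∑ i ∈ s, (f i : ℝ) →
    ∃ t ⊆ s, α < ∑ i ∈ t, (f i : ℝ) ∧ ∑ i ∈ t, (f i : ℝ) ≤ 2 * α := by
  intro s
  induction s using Finset.strongInductionOn with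
  | _ s ih =>
    intro hsm hbg
    by_cases hle : ∑ i ∈ s, (f i : ℝ) ≤ 2 * α
    · exact ⟨s, Finset.Subset.refl s, hbg, hle⟩
    · push_neg at hle
      have hsne : s.Nonempty := by
        rcases Finset.eq_empty_or_nonempty s with rfl | h
        · simp only [Finset.sum_empty] at hbg; linarith
        · exact h
      obtain ⟨i, hi⟩ := hsne
      have herase : ∑ j ∈ s.erase i, (f j : ℝ) = (∑ j ∈ s, (f j : ℝ)) - f i := by
        rw [← Finset.add_sum_erase s _ hi]; ring
      have hbig' : α < ∑ j ∈ s.erase i, (f j : ℝ) := by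
        have := hsm i hi
        rw [herase]; linarith
      obtain ⟨t, hts, h1, h2⟩ := ih (s.erase i) (Finset.erase_ssubset hi)
        (fun j hj => hsm j (Finset.mem_of_mem_erase hj)) hbig'
      exact ⟨t, hts.trans (Finset.erase_subset _ _), h1, h2⟩

lemma small_case (hF : F.IsAcyclic) (α : ℝ) (hα : 1 ≤ α) (u : V)
    (Z : Finset ((Fdel F u).ConnectedComponent)) (hgood : ∀ c' ∈ Z, u ∉ c'.supp)
    (hsm : ∀ c' ∈ Z, ((En F u c').card : ℝ) ≤ α)
    (hbg : α < ∑ c' ∈ Z, ((En F u c').card : ℝ)) :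
    ∃ v : V, ∃ C : Finset F.Subgraph,
      (∀ H ∈ C, IsWSubtree F {v} H) ∧
      α < ∑ H ∈ C, ((H.edgeSet.ncard : ℝ)) ∧
      ∑ H ∈ C, ((H.edgeSet.ncard : ℝ)) ≤ 2 * α := by
  obtain ⟨t, hts, h1, h2⟩ := greedy α hα (fun c' => (En F u c').card) Z hsm hbg
  have hinj : ∀ x ∈ t, ∀ y ∈ t, Tsub F u x = Tsub F u y → x = y :=
    fun x hx _ _ h => tsub_inj (hgood x (hts hx)) h
  have hsum : ∑ H ∈ t.image (Tsub F u), ((H.edgeSet.ncard : ℝ))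
      = ∑ c' ∈ t, ((En F u c').card : ℝ) := by
    rw [Finset.sum_image hinj]
    exact Finset.sum_congr rfl (fun c' _ => by rw [ncard_eq_En])
  refine ⟨u, t.image (Tsub F u), ?_, ?_, ?_⟩
  · intro H hH
    rw [Finset.mem_image] at hH
    obtain ⟨c', hc', rfl⟩ := hH
    exact isWSubtree_tsub hF (hgood c' (hts hc'))
  · rw [hsum]; exact h1
  · rw [hsum]; exact h2

lemma main_rec (hF : F.IsAcyclic) (α : ℝ) (hα : 1 ≤ α) :
    ∀ (m : ℕ) (v : V) (c : (Fdel F v).ConnectedComponent), meas F v c ≤ m →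
      v ∉ c.supp → α < ((En F v c).card : ℝ) →
      ∃ w : V, ∃ C : Finset F.Subgraph,
        (∀ H ∈ C, IsWSubtree F {w} H) ∧
        α < ∑ H ∈ C, ((H.edgeSet.ncard : ℝ)) ∧
        ∑ H ∈ C, ((H.edgeSet.ncard : ℝ)) ≤ 2 * α := by
  intro m
  induction m with
  | zero =>
    intro v c hm hv hbig
    exfalso
    have h1 : 1 ≤ (En F v c).card := by
      by_contra h
      push_neg at h
      have h0 : (En F v c).card = 0 := by omega
      rw [h0] at hbig
      norm_num at hbig
      linarith
    rw [meas] at hm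
    omega
  | succ m ih =>
    intro v c hm hv hbig
    by_cases h2 : ((En F v c).card : ℝ) ≤ 2 * α
    · refine ⟨v, {Tsub F v c}, ?_, ?_, ?_⟩
      · intro H hH
        rw [Finset.mem_singleton] at hH
        subst hH
        exact isWSubtree_tsub hF hv
      · rw [Finset.sum_singleton, ncard_eq_En]; exact hbig
      · rw [Finset.sum_singleton, ncard_eq_En]; exact h2
    · push_neg at h2
      have hne : (En F v c).Nonempty := by
        rw [← Finset.card_pos]
        by_contra h
        push_neg at h
        have h0 : (En F v c).card = 0 := by omega
        rw [h0] at hbig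
        norm_num at hbig
        linarith
      obtain ⟨u, Z, hgood, hsumN, hmeas⟩ := rec_step hF v c hv hne
      by_cases hex : ∃ c' ∈ Z, α < ((En F u c').card : ℝ)
      · obtain ⟨c', hc', hbig'⟩ := hex
        exact ih u c' (by have := hmeas c' hc'; omega) (hgood c' hc') hbig'
      · push_neg at hex
        apply small_case hF α hα u Z hgood hex
        have hsR : ((En F v c).card : ℝ) ≤ (∑ c' ∈ Z, ((En F u c').card : ℝ)) + 1 := by
          have hcast : ((En F v c).card : ℝ) ≤ (((∑ c' ∈ Z, (En F u c').card) + 1 : ℕ) : ℝ) :=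
            Nat.cast_le.mpr hsumN
          push_cast at hcast
          exact hcast
        linarith

end ForestAux

theorem statement_0 {V : Type} [Fintype V] (F : SimpleGraph V) (hF : F.IsAcyclic)
    (α : ℝ) (hα : 1 ≤ α) (hE : α < (F.edgeSet.ncard : ℝ)) :
    ∃ v : V, ∃ C : Finset F.Subgraph,
      (∀ H ∈ C, IsWSubtree F {v} H) ∧
      α < ∑ H ∈ C, ((H.edgeSet.ncard : ℝ)) ∧
      ∑ H ∈ C, ((H.edgeSet.ncard : ℝ)) ≤ 2 * α := by
  classical
  have hEne : F.edgeSet.Nonempty := by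
    rw [Set.nonempty_iff_ne_empty]
    intro h
    rw [h] at hE
    simp only [Set.ncard_empty, Nat.cast_zero] at hE
    linarith
  obtain ⟨e, he⟩ := hEne
  obtain ⟨v0, -⟩ : ∃ _ : V, True := by
    induction e with
    | _ x y => exact ⟨x, trivial⟩
  by_cases hbig : ∃ c ∈ ForestAux.allC F v0, α < ((ForestAux.En F v0 c).card : ℝ)
  · obtain ⟨c, hc, h⟩ := hbig
    exact ForestAux.main_rec hF α hα (ForestAux.meas F v0 c) v0 c le_rfl
      (ForestAux.mem_allC.mp hc) h
  · push_neg at hbig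
    apply ForestAux.small_case hF α hα v0 (ForestAux.allC F v0)
      (fun c hc => ForestAux.mem_allC.mp hc) hbig
    have htot := ForestAux.total_card F v0
    rw [htot] at hE
    push_cast at hE
    exact hE
end

section
/- For every integer w ≥ 0, log₂(3/2)·w + log₂(3) ≤ p_w ≤ w + log_{3/2}(9). -/
open SimpleGraph

lemma q_pos (w : ℕ) : 0 < (2/3:ℝ)^w := by positivity
lemma q_le_one (w : ℕ) : (2/3:ℝ)^w ≤ 1 := pow_le_one₀ (by norm_num) (by norm_num)

lemma ratio_le_two (w : ℕ) : ratio w ≤ 2 := by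
  unfold ratio
  rw [div_le_iff₀ (by positivity)]
  nlinarith [q_pos w]

lemma ratio_ge (w : ℕ) : (3/2:ℝ) ≤ ratio w := by
  unfold ratio
  rw [le_div_iff₀ (by positivity)]
  nlinarith [q_le_one w]

lemma alpha_succ (w p : ℕ) : alphaF w (p + 1) = (1 / (1 + (2/3 : ℝ) ^ w)) * ratio w ^ p := by
  simp [alphaF]

lemma mem_set (w : ℕ) :
    ⌊(w:ℝ) + Real.logb (3/2) 9⌋₊ ∈ {p : ℕ | betaF w ≤ alphaF w (p + 1)} := by
  set p₀ := ⌊(w:ℝ) + Real.logb (3/2) 9⌋₊ with hp₀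
  have hb : (1:ℝ) < 3/2 := by norm_num
  have h1 : (w:ℝ) + Real.logb (3/2) 9 - 1 < (p₀:ℝ) := Nat.sub_one_lt_floor _
  have h2 : ((3:ℝ)/2) ^ ((w:ℝ) + Real.logb (3/2) 9 - 1) ≤ ((3:ℝ)/2) ^ ((p₀:ℝ)) :=
    Real.rpow_le_rpow_left_iff hb |>.2 (le_of_lt h1)
  have h3 : ((3:ℝ)/2) ^ ((w:ℝ) + Real.logb (3/2) 9 - 1) = (3/2:ℝ)^w * 6 := by
    rw [Real.rpow_sub (by norm_num), Real.rpow_add (by norm_num),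
      Real.rpow_logb (by norm_num) (by norm_num) (by norm_num),
      Real.rpow_natCast, Real.rpow_one]
    ring
  rw [Real.rpow_natCast] at h2
  have h4 : (3/2:ℝ)^(p₀:ℕ) ≤ ratio w ^ p₀ :=
    pow_le_pow_left₀ (by norm_num) (ratio_ge w) _
  have h6 : (3/2:ℝ)^w * 6 ≤ ratio w ^ p₀ := by
    calc (3/2:ℝ)^w * 6 ≤ (3/2:ℝ)^(p₀:ℕ) := by rw [← h3]; exact h2
    _ ≤ _ := h4
  simp only [Set.mem_setOf_eq, alpha_succ, betaF]
  have hq := q_pos w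
  have hq1 := q_le_one w
  rw [one_div, inv_mul_eq_div, le_div_iff₀ (by positivity)]
  nlinarith [pow_nonneg (by norm_num : (0:ℝ) ≤ 3/2) w]

theorem statement_2 (w : ℕ) :
    Real.logb 2 (3/2) * w + Real.logb 2 3 ≤ (pW w : ℝ) ∧
    (pW w : ℝ) ≤ w + Real.logb (3/2) 9 := by
  have hne : {p : ℕ | betaF w ≤ alphaF w (p + 1)}.Nonempty := ⟨_, mem_set w⟩
  constructor
  · have hmem : betaF w ≤ alphaF w (pW w + 1) := Nat.sInf_mem hne
    rw [alpha_succ] at hmem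
    have hq := q_pos w
    have hq1 := q_le_one w
    have hr : 0 ≤ ratio w ^ pW w := pow_nonneg (le_trans (by norm_num) (ratio_ge w)) _
    have hc : 1 / (1 + (2/3:ℝ)^w) ≤ 1 := by
      rw [div_le_one (by positivity)]; linarith
    have h1 : (3:ℝ) * (3/2)^w ≤ ratio w ^ pW w := by
      have := mul_le_of_le_one_left hr hc
      have hb : betaF w = 3 * (3/2:ℝ)^w := rfl
      rw [hb] at hmem
      linarith
    have h2 : ratio w ^ pW w ≤ (2:ℝ)^ pW w :=
      pow_le_pow_left₀ (le_trans (by norm_num) (ratio_ge w)) (ratio_le_two w) _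
    have h3 : (3:ℝ) * (3/2)^w ≤ (2:ℝ)^ pW w := le_trans h1 h2
    have h4 := Real.logb_le_logb_of_le (b := 2) (by norm_num) (by positivity) h3
    rw [Real.logb_pow, Real.logb_self_eq_one (by norm_num)] at h4
    rw [Real.logb_mul (by norm_num) (by positivity), Real.logb_pow] at h4
    linarith [h4]
  · have h := Nat.sInf_le (mem_set w)
    have h2 : ((⌊(w:ℝ) + Real.logb (3/2) 9⌋₊ : ℕ) : ℝ) ≤ (w:ℝ) + Real.logb (3/2) 9 := by
      apply Nat.floor_le
      have : 0 < Real.logb (3/2) 9 := Real.logb_pos (by norm_num) (by norm_num)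
      positivity
    calc (pW w : ℝ) ≤ _ := Nat.cast_le.2 h
    _ ≤ _ := h2
end

section
/- There exists an integer W₀ such that for all integers w ≥ W₀ and all integers p ≥ p_w, the graph G_{w,p} has at most 5·2^p vertices. -/
open SimpleGraph

lemma finJ (a b : ℕ) : ∀ m, Finite (JVert a b m)
  | 0 => inferInstanceAs (Finite (Fin b))
  | m + 1 => by
    have := finJ a b m
    exact inferInstanceAs (Finite (Fin a ⊕ (JVert a b m ⊕ JVert a b m)))

lemma cardJ (a b : ℕ) : ∀ m, Nat.card (JVert a b m) + a = 2 ^ m * (a + b)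
  | 0 => by
    show Nat.card (Fin b) + a = 2 ^ 0 * (a + b)
    simp [Nat.add_comm]
  | m + 1 => by
    have := finJ a b m
    have ih := cardJ a b m
    show Nat.card (Fin a ⊕ (JVert a b m ⊕ JVert a b m)) + a = 2 ^ (m + 1) * (a + b)
    rw [Nat.card_sum, Nat.card_sum, Nat.card_eq_fintype_card, Fintype.card_fin]
    have h2 : 2 ^ (m + 1) * (a + b) = 2 * (2 ^ m * (a + b)) := by ring
    omega

lemma pW_mem (w : ℕ) : betaF w ≤ alphaF w (pW w + 1) := by
  have hne : (w + 5) ∈ {p : ℕ | betaF w ≤ alphaF w (p + 1)} := by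
    have ht0 : (0:ℝ) < (2/3:ℝ) ^ w := by positivity
    have ht1 : ((2/3:ℝ)) ^ w ≤ 1 := pow_le_one₀ (by norm_num) (by norm_num)
    show betaF w ≤ alphaF w (w + 5 + 1)
    unfold betaF alphaF ratio
    have h1 : (1:ℝ)/2 ≤ 1 / (1 + (2/3:ℝ) ^ w) := by
      apply div_le_div_of_nonneg_left (by norm_num) (by linarith) (by linarith)
    have h2 : (3/2:ℝ) ≤ (2 + (2/3:ℝ) ^ w) / (1 + (2/3:ℝ) ^ w) := by
      rw [le_div_iff₀ (by linarith)]; linarith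
    have h3 : ((3/2:ℝ)) ^ (w + 5) ≤ ((2 + (2/3:ℝ) ^ w) / (1 + (2/3:ℝ) ^ w)) ^ (w + 5) :=
      pow_le_pow_left₀ (by norm_num) h2 _
    have h4 : (3:ℝ) * (3/2) ^ w ≤ (1/2) * (3/2 : ℝ) ^ (w + 5) := by
      rw [pow_add]; ring_nf; nlinarith [pow_pos (show (0:ℝ) < 3/2 by norm_num) w]
    calc (3:ℝ) * (3/2) ^ w ≤ (1/2) * (3/2 : ℝ) ^ (w + 5) := h4
      _ ≤ (1 / (1 + (2/3:ℝ) ^ w)) * ((2 + (2/3:ℝ) ^ w) / (1 + (2/3:ℝ) ^ w)) ^ (w + 5) := by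
          apply mul_le_mul h1 h3 (by positivity) (by positivity)
      _ = (1 / (1 + (2/3:ℝ) ^ w)) * ((2 + (2/3:ℝ) ^ w) / (1 + (2/3:ℝ) ^ w)) ^ (w + 5 + 1 - 1) := by
          norm_num
  exact Nat.sInf_mem ⟨w + 5, hne⟩

lemma beta_le (w : ℕ) : betaF w ≤ 2 ^ pW w := by
  have ht0 : (0:ℝ) < (2/3:ℝ) ^ w := by positivity
  have ht1 : ((2/3:ℝ)) ^ w ≤ 1 := pow_le_one₀ (by norm_num) (by norm_num)
  have h := pW_mem w
  unfold alphaF ratio at h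
  have hr : (2 + (2/3:ℝ) ^ w) / (1 + (2/3:ℝ) ^ w) ≤ 2 := by
    rw [div_le_iff₀ (by linarith)]; linarith
  have hr0 : (0:ℝ) ≤ (2 + (2/3:ℝ) ^ w) / (1 + (2/3:ℝ) ^ w) := by positivity
  calc betaF w ≤ (1 / (1 + (2/3:ℝ) ^ w)) *
        ((2 + (2/3:ℝ) ^ w) / (1 + (2/3:ℝ) ^ w)) ^ (pW w + 1 - 1) := h
    _ ≤ 1 * (2:ℝ) ^ pW w := by
        apply mul_le_mul
        · rw [div_le_one (by linarith)]; linarith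
        · simpa using pow_le_pow_left₀ hr0 hr (pW w)
        · positivity
        · norm_num
    _ = 2 ^ pW w := one_mul _

lemma key_ineq (w : ℕ) : ⌈deltaF w⌉₊ + (w + 1) ≤ 5 * 2 ^ pW w := by
  have ht0 : (0:ℝ) < (2/3:ℝ) ^ w := by positivity
  have ht1 : ((2/3:ℝ)) ^ w ≤ 1 := pow_le_one₀ (by norm_num) (by norm_num)
  have hb : (0:ℝ) < (3/2:ℝ) ^ w := by positivity
  have hbern : 1 + (w:ℝ) * (1/2) ≤ (3/2:ℝ) ^ w := by
    have := one_add_mul_le_pow (show (-2:ℝ) ≤ 1/2 by norm_num) w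
    calc 1 + (w:ℝ) * (1/2) = 1 + (w:ℝ) * (1/2) := rfl
      _ ≤ (1 + 1/2:ℝ) ^ w := this
      _ = (3/2:ℝ) ^ w := by norm_num
  have hd : deltaF w ≤ 9 * (3/2:ℝ) ^ w := by
    unfold deltaF betaF; nlinarith
  have hd0 : (0:ℝ) ≤ deltaF w := by
    unfold deltaF betaF; positivity
  have hceil : (⌈deltaF w⌉₊ : ℝ) < deltaF w + 1 := Nat.ceil_lt_add_one hd0
  have hβ := beta_le w
  unfold betaF at hβ
  rw [← Nat.cast_le (α := ℝ)]
  push_cast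
  calc (⌈deltaF w⌉₊ : ℝ) + ((w:ℝ) + 1) ≤ deltaF w + 1 + (w + 1) := by linarith
    _ ≤ 9 * (3/2:ℝ) ^ w + w + 2 := by linarith
    _ ≤ 15 * (3/2:ℝ) ^ w := by nlinarith
    _ = 5 * (3 * (3/2:ℝ) ^ w) := by ring
    _ ≤ 5 * 2 ^ pW w := by linarith

theorem statement_6 : ∃ W₀ : ℕ, ∀ w : ℕ, W₀ ≤ w → ∀ p : ℕ, pW w ≤ p →
    Nat.card (GwpVert w p) ≤ 5 * 2 ^ p := by
  refine ⟨0, fun w _ p hp => ?_⟩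
  have hcard := cardJ (w + 1) ⌈deltaF w⌉₊ (p - pW w)
  have hkey := key_ineq w
  have hc : Nat.card (GwpVert w p) = Nat.card (JVert (w + 1) ⌈deltaF w⌉₊ (p - pW w)) := rfl
  rw [hc]
  have h1 : Nat.card (JVert (w + 1) ⌈deltaF w⌉₊ (p - pW w)) ≤
      2 ^ (p - pW w) * ((w + 1) + ⌈deltaF w⌉₊) := by omega
  have h2 : 2 ^ (p - pW w) * ((w + 1) + ⌈deltaF w⌉₊) ≤ 2 ^ (p - pW w) * (5 * 2 ^ pW w) :=
    Nat.mul_le_mul_left _ (by omega)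
  have h3 : 2 ^ (p - pW w) * (5 * 2 ^ pW w) = 5 * 2 ^ p := by
    have hpe : p - pW w + pW w = p := by omega
    rw [← mul_assoc, mul_comm (2 ^ (p - pW w)) 5, mul_assoc, ← pow_add, hpe]
  exact le_trans h1 (le_trans h2 h3.le)
end

section
/- There exist constants C > 0 and N such that for every integer n ≥ N, s(n) ≤ C·n·(ln n)·(ln ln n); that is, there is a graph with at most C·n·(ln n)·(ln ln n) edges that contains every tree on n vertices. -/
open SimpleGraph

section UniversalTreeGraph
set_option linter.unusedVariables false

namespace S9
open scoped Classical

variable {V : Type}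


/-- greedy subfamily with sum in window [τ, 2τ-1] -/
lemma greedy {α : Type} [DecidableEq α] (τ : ℕ) (hτ : 1 ≤ τ) :
    ∀ (P : Finset (Finset α)), (∀ D ∈ P, D.card ≤ τ) → τ ≤ ∑ D ∈ P, D.card →
    ∃ Q ⊆ P, τ ≤ ∑ D ∈ Q, D.card ∧ ∑ D ∈ Q, D.card ≤ 2*τ - 1 := by
  intro P
  induction P using Finset.strongInduction with
  | _ P ih =>
    intro hsmall htot
    by_cases hbig : ∑ D ∈ P, D.card ≤ 2*τ - 1
    · exact ⟨P, le_refl _, htot, hbig⟩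
    · have hP : P.Nonempty := by
        rcases P.eq_empty_or_nonempty with h | h
        · subst h; simp at htot; omega
        · exact h
      obtain ⟨D, hD⟩ := hP
      have hsub : P.erase D ⊂ P := Finset.erase_ssubset hD
      have hsum : ∑ E ∈ P.erase D, E.card = (∑ E ∈ P, E.card) - D.card := by
        rw [← Finset.add_sum_erase _ _ hD]; omega
      have hDle := hsmall D hD
      obtain ⟨Q, hQ, h1, h2⟩ := ih _ hsub (fun E hE => hsmall E (Finset.mem_of_mem_erase hE))
        (by omega)
      exact ⟨Q, hQ.trans (Finset.erase_subset _ _), h1, h2⟩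

/-- component of v in H -/
def compSet (H : SimpleGraph V) (v : V) : Set V := {u | H.Reachable u v}

lemma mem_compSet_self (H : SimpleGraph V) (v : V) : v ∈ compSet H v := Reachable.refl v

lemma compSet_eq_of_mem {H : SimpleGraph V} {u v : V} (h : u ∈ compSet H v) :
    compSet H u = compSet H v := by
  ext x; exact ⟨fun hx => hx.trans h, fun hx => hx.trans h.symm⟩

lemma compSet_closed {H : SimpleGraph V} {u v y : V} (h : u ∈ compSet H v) (hadj : H.Adj u y) :
    y ∈ compSet H v := (hadj.symm.reachable).trans h

/-- delete a vertex, keeping it isolated -/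
def del (G : SimpleGraph V) (r : V) : SimpleGraph V where
  Adj x y := G.Adj x y ∧ x ≠ r ∧ y ≠ r
  symm := ⟨fun x y h => ⟨h.1.symm, h.2.2, h.2.1⟩⟩
  loopless := ⟨fun x h => G.loopless.irrefl x h.1⟩

lemma del_le (G : SimpleGraph V) (r : V) : del G r ≤ G := fun _ _ h => h.1

lemma del_reachable_ne {G : SimpleGraph V} {r u : V} (h : (del G r).Reachable u r) : u = r := by
  obtain ⟨p⟩ := h
  have key : ∀ (q : (del G r).Walk r u), u = r := by
    intro q
    cases q with
    | nil => rfl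
    | cons h _ => exact absurd rfl h.2.1
  exact key p.reverse

/-- walks transfer to induced subgraphs -/
lemma reach_induce {G : SimpleGraph V} {S : Set V} :
    ∀ {x y : V} (p : G.Walk x y) (hsupp : ∀ z ∈ p.support, z ∈ S) (hx : x ∈ S) (hy : y ∈ S),
    (G.induce S).Reachable ⟨x, hx⟩ ⟨y, hy⟩ := by
  intro x y p
  induction p with
  | nil => intro _ hx _; rfl
  | @cons a b c h q ih =>
    intro hsupp hx hy
    have hb : b ∈ S := hsupp b (by simp)
    have h1 : (G.induce S).Adj ⟨a, hx⟩ ⟨b, hb⟩ := h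
    exact h1.reachable.trans (ih (fun z hz => hsupp z (by simp [hz])) hb hy)

lemma support_subset_compSet {H : SimpleGraph V} {v : V} :
    ∀ {x y : V} (p : H.Walk x y) (hx : x ∈ compSet H v), ∀ z ∈ p.support, z ∈ compSet H v := by
  intro x y p
  induction p with
  | nil => intro hx z hz; simp at hz; subst hz; exact hx
  | @cons a b c h q ih =>
    intro hx z hz
    simp only [SimpleGraph.Walk.support_cons, List.mem_cons] at hz
    rcases hz with rfl | hz
    · exact hx
    · exact ih (compSet_closed hx h) z hz

/-- induced graph on a component (of a subgraph H ≤ G) is connected -/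
lemma comp_induce_connected {H G : SimpleGraph V} (hHG : H ≤ G) (v₀ : V) :
    (G.induce (compSet H v₀)).Connected := by
  rw [SimpleGraph.connected_iff]
  constructor
  · rintro ⟨x, hx⟩ ⟨y, hy⟩
    have hr : H.Reachable x y := hx.trans (Reachable.symm hy)
    obtain ⟨p⟩ := hr
    have hs := support_subset_compSet p hx
    exact reach_induce (p.mapLe hHG)
      (by intro z hz; rw [SimpleGraph.Walk.mapLe, SimpleGraph.Walk.support_map] at hz;
          simpa using hs z (by simpa using hz)) hx hy
  · exact ⟨⟨v₀, mem_compSet_self H v₀⟩⟩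

/-- induced subgraph of acyclic is acyclic -/
lemma isAcyclic_induce {G : SimpleGraph V} (hG : G.IsAcyclic) (S : Set V) :
    (G.induce S).IsAcyclic := by
  intro v p hp
  exact hG (p.map (SimpleGraph.Embedding.induce (G := G) S).toHom)
    (hp.map (SimpleGraph.Embedding.induce (G := G) S).injective)


noncomputable def compF (H : SimpleGraph V) [Fintype V] (v : V) : Finset V :=
  Finset.univ.filter (· ∈ compSet H v)

noncomputable def comps (H : SimpleGraph V) [Fintype V] : Finset (Finset V) :=
  Finset.univ.image (compF H)

variable [Fintype V] {H : SimpleGraph V}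

lemma mem_compF {u v : V} : u ∈ compF H v ↔ u ∈ compSet H v := by
  simp [compF]

lemma coe_compF (v : V) : (compF H v : Set V) = compSet H v := by
  ext u; simp [mem_compF]

lemma compF_eq_of_mem {u v : V} (h : u ∈ compF H v) : compF H u = compF H v := by
  unfold compF
  rw [compSet_eq_of_mem (mem_compF.1 h)]

lemma mem_comps_iff {D : Finset V} : D ∈ comps H ↔ ∃ v, D = compF H v := by
  simp [comps, eq_comm]

lemma comps_disjoint {D E : Finset V} (hD : D ∈ comps H) (hE : E ∈ comps H) (hne : D ≠ E) :
    Disjoint D E := by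
  obtain ⟨v, rfl⟩ := mem_comps_iff.1 hD
  obtain ⟨u, rfl⟩ := mem_comps_iff.1 hE
  rw [Finset.disjoint_left]
  intro x hx hx'
  exact hne ((compF_eq_of_mem hx).symm.trans (compF_eq_of_mem hx'))

lemma sum_comps (H : SimpleGraph V) : ∑ D ∈ comps H, D.card = Fintype.card V := by
  have hdis : ∀ D ∈ comps H, ∀ E ∈ comps H, D ≠ E → Disjoint (id D) (id E) :=
    fun D hD E hE hne => comps_disjoint hD hE hne
  have : (comps H).biUnion id = Finset.univ := by
    apply Finset.eq_univ_of_forall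
    intro v
    rw [Finset.mem_biUnion]
    exact ⟨compF H v, Finset.mem_image_of_mem _ (Finset.mem_univ v),
      mem_compF.2 (mem_compSet_self H v)⟩
  have h2 := Finset.card_biUnion hdis
  rw [this, Finset.card_univ] at h2
  simpa using h2.symm

lemma compF_del_self (G : SimpleGraph V) (r : V) : compF (del G r) r = {r} := by
  ext u
  simp only [mem_compF, Finset.mem_singleton]
  constructor
  · exact fun h => del_reachable_ne h
  · rintro rfl; exact mem_compSet_self _ _

/-- crossing edge into a component of G - r comes from r -/
lemma cross {G : SimpleGraph V} {r d : V} (hr : r ∉ compSet (del G r) d) :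
    ∀ {x y : V} (p : G.Walk x y), x ∉ compSet (del G r) d → y ∈ compSet (del G r) d →
      ∃ u ∈ compSet (del G r) d, G.Adj r u := by
  intro x y p
  induction p with
  | nil => intro hx hy; exact absurd hy hx
  | @cons a b c h q ih =>
    intro hx hy
    by_cases hb : b ∈ compSet (del G r) d
    · by_cases har : a = r
      · exact ⟨b, hb, har ▸ h⟩
      · exfalso
        have : (del G r).Adj a b := ⟨h, har, fun hbr => hr (hbr ▸ hb)⟩
        exact hx (compSet_closed hb this.symm)
    · exact ih hb hy

lemma del_support_ne {G : SimpleGraph V} {r : V} :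
    ∀ {a b : V} (p : (del G r).Walk a b), a ≠ r → ∀ z ∈ p.support, z ≠ r := by
  intro a b p
  induction p with
  | nil => intro ha z hz; simp at hz; subst hz; exact ha
  | @cons a c b h q ih =>
    intro ha z hz
    simp only [SimpleGraph.Walk.support_cons, List.mem_cons] at hz
    rcases hz with rfl | hz
    · exact ha
    · exact ih h.2.2 z hz

/-- in an acyclic graph, a component of G - r has at most one neighbor of r -/
lemma uniq_nbr {G : SimpleGraph V} (hac : G.IsAcyclic) {r a b : V}
    (ha : G.Adj r a) (hb : G.Adj r b) (hre : (del G r).Reachable a b) : a = b := by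
  obtain ⟨p⟩ := hre
  have hanr : a ≠ r := fun h => (h ▸ ha).ne rfl |>.elim
  have hsupp : ∀ z ∈ p.support, z ≠ r := del_support_ne p hanr
  have hq0supp : ∀ z ∈ (p.mapLe (del_le G r)).support, z ≠ r := by
    intro z hz
    rw [SimpleGraph.Walk.mapLe, SimpleGraph.Walk.support_map] at hz
    exact hsupp z (by simpa using hz)
  set q := (p.mapLe (del_le G r)).toPath with hq
  have hqsupp : ∀ z ∈ (q : G.Walk a b).support, z ≠ r := fun z hz =>
    hq0supp z (SimpleGraph.Walk.support_toPath_subset _ hz)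
  have hP2 : (SimpleGraph.Walk.cons ha (q : G.Walk a b)).IsPath := by
    rw [SimpleGraph.Walk.cons_isPath_iff]
    exact ⟨q.2, fun h => hqsupp r h rfl⟩
  have huniq := hac.path_unique (SimpleGraph.Path.singleton hb) ⟨_, hP2⟩
  have hmem : a ∈ (SimpleGraph.Path.singleton hb : G.Walk r b).support := by
    rw [huniq]
    simp
  simp [SimpleGraph.Path.singleton] at hmem
  rcases hmem with h | h
  · exact absurd h hanr
  · exact h

/-- Main tree carving lemma: in a tree, one can remove one vertex v and split off a closed
set X (avoiding a marked vertex r) with τ ≤ |X| ≤ 2τ-1. -/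
theorem carve_tree : ∀ (k : ℕ) (V : Type) [Fintype V] (G : SimpleGraph V),
    Fintype.card V ≤ k → G.Connected → G.IsAcyclic → ∀ (r : V) (τ : ℕ), 1 ≤ τ →
    τ + 1 ≤ Fintype.card V →
    ∃ (v : V) (X : Set V), v ∉ X ∧ r ∉ X ∧
      (∀ x ∈ X, ∀ y, G.Adj x y → y ∈ X ∨ y = v) ∧ τ ≤ X.ncard ∧ X.ncard ≤ 2*τ - 1 := by
  intro k
  induction k with
  | zero => intro V _ G hcard _ _ r τ hτ hV; omega
  | succ k ih =>
    intro V instV G hcard hconn hacyc r τ hτ hV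
    set H := del G r with hHdef
    set P := (comps H).erase (compF H r) with hPdef
    have hrP : ∀ D ∈ P, (r : V) ∉ D := by
      intro D hD hrd
      obtain ⟨v, rfl⟩ := mem_comps_iff.1 (Finset.mem_of_mem_erase hD)
      exact (Finset.ne_of_mem_erase hD) (compF_eq_of_mem hrd ▸ rfl)
    have hsumP : ∑ D ∈ P, D.card = Fintype.card V - 1 := by
      have h1 : compF H r ∈ comps H := mem_comps_iff.2 ⟨r, rfl⟩
      have h2 : (compF H r).card + ∑ D ∈ P, D.card = ∑ D ∈ comps H, D.card :=
        Finset.add_sum_erase (comps H) (fun D => D.card) h1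
      have h4 := sum_comps H
      have h3 : (compF H r).card = 1 := by rw [compF_del_self]; simp
      omega
    have hclosed : ∀ D ∈ P, ∀ x ∈ D, ∀ y, G.Adj x y → y = r ∨ y ∈ D := by
      intro D hD x hx y hadj
      by_cases hyr : y = r
      · exact Or.inl hyr
      · right
        have hxr : x ≠ r := fun h => hrP D hD (h ▸ hx)
        obtain ⟨v, rfl⟩ := mem_comps_iff.1 (Finset.mem_of_mem_erase hD)
        have : H.Adj x y := ⟨hadj, hxr, hyr⟩
        exact mem_compF.2 (compSet_closed (mem_compF.1 hx) this)
    by_cases hcaseA : ∃ D ∈ P, τ ≤ D.card ∧ D.card ≤ 2*τ - 1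
    · obtain ⟨D, hDP, h1, h2⟩ := hcaseA
      refine ⟨r, ↑D, hrP D hDP, hrP D hDP, ?_, ?_, ?_⟩
      · intro x hx y hadj
        rcases hclosed D hDP x hx y hadj with h | h
        · exact Or.inr h
        · exact Or.inl h
      · rwa [Set.ncard_coe_finset]
      · rwa [Set.ncard_coe_finset]
    · by_cases hcaseB : ∃ D ∈ P, 2*τ ≤ D.card
      · obtain ⟨D, hDP, hD2⟩ := hcaseB
        obtain ⟨d, rfl⟩ := mem_comps_iff.1 (Finset.mem_of_mem_erase hDP)
        set S := compSet H d with hSdef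
        have hcoe : (compF H d : Set V) = S := coe_compF d
        have hrS : r ∉ S := by
          intro h
          exact hrP _ hDP (mem_compF.2 h)
        have hdS : d ∈ S := mem_compSet_self H d
        -- find the neighbor u₀ of r in S
        obtain ⟨pw⟩ := hconn.preconnected r d
        obtain ⟨u₀, hu₀S, hu₀adj⟩ := cross hrS pw hrS hdS
        -- set up the induced graph
        have hScard : S.ncard = (compF H d).card := by rw [← hcoe, Set.ncard_coe_finset]
        have hcard' : Fintype.card ↥S = S.ncard := by
          rw [Set.ncard_eq_toFinset_card', Set.toFinset_card]
        have hlt : Fintype.card ↥S < Fintype.card V :=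
          Fintype.card_lt_of_injective_of_notMem Subtype.val Subtype.val_injective
            (by simpa using hrS)
        have hconn' : (G.induce S).Connected := comp_induce_connected (del_le G r) d
        have hacyc' : (G.induce S).IsAcyclic := isAcyclic_induce hacyc S
        obtain ⟨v', X', hv'X, hrX', hcut', hlo, hhi⟩ :=
          ih ↥S (G.induce S) (by omega) hconn' hacyc' ⟨u₀, hu₀S⟩ τ hτ
            (by rw [hcard', hScard]; omega)
        refine ⟨↑v', Subtype.val '' X', ?_, ?_, ?_, ?_, ?_⟩
        · rintro ⟨x', hx', hval⟩
          exact hv'X ((Subtype.val_injective hval) ▸ hx')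
        · rintro ⟨x', _, hval⟩
          exact hrS (hval ▸ x'.2)
        · rintro x ⟨x', hx', rfl⟩ y hadj
          by_cases hyS : y ∈ S
          · have : (G.induce S).Adj x' ⟨y, hyS⟩ := hadj
            rcases hcut' x' hx' ⟨y, hyS⟩ this with h | h
            · exact Or.inl ⟨⟨y, hyS⟩, h, rfl⟩
            · exact Or.inr (congrArg Subtype.val h)
          · by_cases hyr : y = r
            · exfalso
              have hadj2 : G.Adj r ↑x' := by rw [hyr] at hadj; exact hadj.symm
              have hreach : (del G r).Reachable ↑x' u₀ := (x'.2).trans (Reachable.symm hu₀S)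
              have heq : (x' : V) = u₀ := uniq_nbr hacyc hadj2 hu₀adj hreach
              apply hrX'
              have hx'eq : x' = ⟨u₀, hu₀S⟩ := Subtype.ext heq
              rwa [hx'eq] at hx'
            · exfalso
              have : H.Adj ↑x' y := ⟨hadj, fun h => hrS (h ▸ x'.2), hyr⟩
              exact hyS (compSet_closed x'.2 this)
        · rwa [Set.ncard_image_of_injective _ Subtype.val_injective]
        · rwa [Set.ncard_image_of_injective _ Subtype.val_injective]
      · -- all components small: greedy
        push_neg at hcaseA hcaseB
        have hsmall : ∀ D ∈ P, D.card ≤ τ := by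
          intro D hD
          by_contra h
          push_neg at h
          have h1 := hcaseB D hD
          have h2 := hcaseA D hD
          omega
        obtain ⟨Q, hQP, hQlo, hQhi⟩ := greedy τ hτ P hsmall (by omega)
        set X := Q.biUnion id with hXdef
        have hXcard : X.card = ∑ D ∈ Q, D.card := by
          rw [hXdef]
          apply Finset.card_biUnion
          intro D hD E hE hne
          exact comps_disjoint (Finset.mem_of_mem_erase (hQP hD))
            (Finset.mem_of_mem_erase (hQP hE)) hne
        refine ⟨r, ↑X, ?_, ?_, ?_, ?_, ?_⟩
        · intro hr
          rw [Finset.mem_coe, hXdef, Finset.mem_biUnion] at hr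
          obtain ⟨D, hD, hrD⟩ := hr
          exact hrP D (hQP hD) hrD
        · intro hr
          rw [Finset.mem_coe, hXdef, Finset.mem_biUnion] at hr
          obtain ⟨D, hD, hrD⟩ := hr
          exact hrP D (hQP hD) hrD
        · intro x hx y hadj
          rw [Finset.mem_coe, hXdef, Finset.mem_biUnion] at hx
          obtain ⟨D, hD, hxD⟩ := hx
          rcases hclosed D (hQP hD) x hxD y hadj with h | h
          · exact Or.inr h
          · exact Or.inl (by
              rw [Finset.mem_coe, hXdef, Finset.mem_biUnion]
              exact ⟨D, hD, h⟩)
        · rw [Set.ncard_coe_finset, hXcard]; omega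
        · rw [Set.ncard_coe_finset, hXcard]; omega

/-- Forest carving: remove at most one vertex A and split off closed X with τ ≤ |X| ≤ 2τ-1. -/
theorem carve_forest : ∀ (k : ℕ) (V : Type) [Fintype V] (F : SimpleGraph V),
    Fintype.card V ≤ k → F.IsAcyclic → ∀ (τ : ℕ), 1 ≤ τ → τ ≤ Fintype.card V →
    ∃ (A X : Set V), Disjoint A X ∧ A.ncard ≤ 1 ∧
      (∀ x ∈ X, ∀ y, F.Adj x y → y ∈ X ∨ y ∈ A) ∧ τ ≤ X.ncard ∧ X.ncard ≤ 2*τ - 1 := by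
  intro k
  induction k with
  | zero => intro V _ F hcard _ τ hτ hV; omega
  | succ k ih =>
    intro V instV F hcard hacyc τ hτ hV
    have hne : Nonempty V := Fintype.card_pos_iff.1 (by omega)
    obtain ⟨v₀⟩ := hne
    set C := compSet F v₀ with hCdef
    have hv₀C : v₀ ∈ C := mem_compSet_self F v₀
    have hCfin : C.Finite := Set.toFinite C
    have hc1 : 1 ≤ C.ncard := (Set.ncard_pos hCfin).2 ⟨v₀, hv₀C⟩
    have hcardC : Fintype.card ↥C = C.ncard := by
      rw [Set.ncard_eq_toFinset_card', Set.toFinset_card]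
    by_cases hcase1 : τ + 1 ≤ C.ncard
    · -- tree case
      have hconn' : (F.induce C).Connected := comp_induce_connected (le_refl F) v₀
      have hacyc' : (F.induce C).IsAcyclic := isAcyclic_induce hacyc C
      obtain ⟨v', X', hv'X, _, hcut', hlo, hhi⟩ :=
        carve_tree (Fintype.card ↥C) ↥C (F.induce C) (le_refl _) hconn' hacyc'
          ⟨v₀, hv₀C⟩ τ hτ (by omega)
      refine ⟨{↑v'}, Subtype.val '' X', ?_, ?_, ?_, ?_, ?_⟩
      · rw [Set.disjoint_singleton_left]
        rintro ⟨x', hx', hval⟩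
        exact hv'X ((Subtype.val_injective hval) ▸ hx')
      · simp
      · rintro x ⟨x', hx', rfl⟩ y hadj
        by_cases hyC : y ∈ C
        · have : (F.induce C).Adj x' ⟨y, hyC⟩ := hadj
          rcases hcut' x' hx' ⟨y, hyC⟩ this with h | h
          · exact Or.inl ⟨⟨y, hyC⟩, h, rfl⟩
          · exact Or.inr (by rw [← h]; rfl)
        · exact absurd (compSet_closed x'.2 hadj) hyC
      · rwa [Set.ncard_image_of_injective _ Subtype.val_injective]
      · rwa [Set.ncard_image_of_injective _ Subtype.val_injective]
    · by_cases hcase2 : τ ≤ C.ncard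
      · -- C has exactly size τ
        refine ⟨∅, C, Set.empty_disjoint C, by simp, ?_, hcase2, by omega⟩
        intro x hx y hadj
        exact Or.inl (compSet_closed hx hadj)
      · -- recurse on complement
        push_neg at hcase2
        set τ' := τ - C.ncard with hτ'def
        have hcardCc : Fintype.card ↥(Cᶜ) = Fintype.card V - C.ncard := by
          rw [Fintype.card_compl_set, hcardC]
        obtain ⟨A', X', hdis', hA', hcut', hlo', hhi'⟩ :=
          ih ↥(Cᶜ) (F.induce Cᶜ) (by omega) (isAcyclic_induce hacyc Cᶜ) τ'
            (by omega) (by omega)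
        refine ⟨Subtype.val '' A', Subtype.val '' X' ∪ C, ?_, ?_, ?_, ?_, ?_⟩
        · rw [Set.disjoint_union_right]
          constructor
          · exact (Set.disjoint_image_of_injective Subtype.val_injective hdis')
          · rw [Set.disjoint_left]
            rintro a ⟨a', _, rfl⟩ haC
            exact a'.2 haC
        · rwa [Set.ncard_image_of_injective _ Subtype.val_injective]
        · intro x hx y hadj
          rcases hx with ⟨x', hx', rfl⟩ | hxC
          · by_cases hyC : y ∈ C
            · exfalso
              exact x'.2 (compSet_closed hyC hadj.symm)
            · have : (F.induce Cᶜ).Adj x' ⟨y, hyC⟩ := hadj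
              rcases hcut' x' hx' ⟨y, hyC⟩ this with h | h
              · exact Or.inl (Or.inl ⟨⟨y, hyC⟩, h, rfl⟩)
              · exact Or.inr ⟨⟨y, hyC⟩, h, rfl⟩
          · exact Or.inl (Or.inr (compSet_closed hxC hadj))
        · have hdisj : Disjoint (Subtype.val '' X' : Set V) C := by
            rw [Set.disjoint_left]
            rintro a ⟨a', _, rfl⟩ haC
            exact a'.2 haC
          rw [Set.ncard_union_eq hdisj (Set.toFinite _) hCfin,
            Set.ncard_image_of_injective _ Subtype.val_injective]
          omega
        · have hdisj : Disjoint (Subtype.val '' X' : Set V) C := by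
            rw [Set.disjoint_left]
            rintro a ⟨a', _, rfl⟩ haC
            exact a'.2 haC
          rw [Set.ncard_union_eq hdisj (Set.toFinite _) hCfin,
            Set.ncard_image_of_injective _ Subtype.val_injective]
          omega

/-- Balanced separator for forests. -/
theorem split : ∀ (w : ℕ) (V : Type) [Fintype V] (F : SimpleGraph V), F.IsAcyclic →
    4*w + 8 ≤ Fintype.card V →
    ∃ (A X : Set V), Disjoint A X ∧ A.ncard ≤ w ∧
      (∀ x ∈ X, ∀ y, F.Adj x y → y ∈ X ∨ y ∈ A) ∧
      X.ncard ≤ Fintype.card V / 2 ∧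
      Fintype.card V / 2 - X.ncard ≤ max (Fintype.card V / 2 ^ w) 2 := by
  intro w
  induction w with
  | zero =>
    intro V _ F _ _
    refine ⟨∅, ∅, Set.empty_disjoint ∅, by simp, by simp, by simp, ?_⟩
    simp only [pow_zero, Nat.div_one, Set.ncard_empty, Nat.sub_zero]
    exact le_max_of_le_left (Nat.div_le_self _ _)
  | succ w ih =>
    intro V instV F hacyc hbig
    obtain ⟨A, X, hdis, hA, hcut, hXle, hdef⟩ := ih V F hacyc (by omega)
    by_cases hdone : Fintype.card V / 2 - X.ncard ≤ max (Fintype.card V / 2 ^ (w+1)) 2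
    · exact ⟨A, X, hdis, by omega, hcut, hXle, hdone⟩
    · set δ := Fintype.card V / 2 - X.ncard with hδdef
      have hδ3 : 3 ≤ δ := by
        have := le_max_right (Fintype.card V / 2 ^ (w+1)) 2
        omega
      have hδt : δ ≤ Fintype.card V / 2 ^ w := by
        rcases max_cases (Fintype.card V / 2 ^ w) 2 with ⟨h1, _⟩ | ⟨h1, _⟩ <;> omega
      have htt : Fintype.card V / 2 ^ w / 2 = Fintype.card V / 2 ^ (w+1) := by
        rw [Nat.div_div_eq_div_mul, ← pow_succ]
      set τ := (δ + 1) / 2 with hτdef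
      have hfinA : A.Finite := Set.toFinite A
      have hfinX : X.Finite := Set.toFinite X
      have hAX : (A ∪ X).ncard = A.ncard + X.ncard := Set.ncard_union_eq hdis hfinA hfinX
      have hcardY : Fintype.card ↥((A ∪ X)ᶜ) = Fintype.card V - (A.ncard + X.ncard) := by
        rw [Fintype.card_compl_set, ← hAX, Set.ncard_eq_toFinset_card', Set.toFinset_card]
      have hτY : τ ≤ Fintype.card ↥((A ∪ X)ᶜ) := by omega
      have hτ1 : 1 ≤ τ := by omega
      obtain ⟨A₁, X₁, hdis₁, hA₁, hcut₁, hlo₁, hhi₁⟩ :=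
        carve_forest (Fintype.card ↥((A ∪ X)ᶜ)) ↥((A ∪ X)ᶜ) (F.induce (A ∪ X)ᶜ) (le_refl _)
          (isAcyclic_induce hacyc _) τ hτ1 hτY
      have hsubYA : (Subtype.val '' A₁ : Set V) ⊆ (A ∪ X)ᶜ := by
        rintro a ⟨a', _, rfl⟩; exact a'.2
      have hsubYX : (Subtype.val '' X₁ : Set V) ⊆ (A ∪ X)ᶜ := by
        rintro a ⟨a', _, rfl⟩; exact a'.2
      refine ⟨A ∪ Subtype.val '' A₁, X ∪ Subtype.val '' X₁, ?_, ?_, ?_, ?_, ?_⟩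
      · rw [Set.disjoint_union_left, Set.disjoint_union_right, Set.disjoint_union_right]
        refine ⟨⟨hdis, ?_⟩, ?_, ?_⟩
        · exact Set.disjoint_of_subset Set.subset_union_left hsubYX disjoint_compl_right
        · exact Set.disjoint_of_subset hsubYA Set.subset_union_right disjoint_compl_left
        · exact Set.disjoint_image_of_injective Subtype.val_injective hdis₁
      · have : Disjoint A (Subtype.val '' A₁) :=
          Set.disjoint_of_subset Set.subset_union_left hsubYA disjoint_compl_right
        rw [Set.ncard_union_eq this hfinA (Set.toFinite _),
          Set.ncard_image_of_injective _ Subtype.val_injective]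
        omega
      · intro x hx y hadj
        rcases hx with hxX | ⟨x', hx', rfl⟩
        · rcases hcut x hxX y hadj with h | h
          · exact Or.inl (Or.inl h)
          · exact Or.inr (Or.inl h)
        · by_cases hyY : y ∈ (A ∪ X)ᶜ
          · have : (F.induce (A ∪ X)ᶜ).Adj x' ⟨y, hyY⟩ := hadj
            rcases hcut₁ x' hx' ⟨y, hyY⟩ this with h | h
            · exact Or.inl (Or.inr ⟨⟨y, hyY⟩, h, rfl⟩)
            · exact Or.inr (Or.inr ⟨⟨y, hyY⟩, h, rfl⟩)
          · rw [Set.notMem_compl_iff] at hyY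
            rcases hyY with h | h
            · exact Or.inr (Or.inl h)
            · exact Or.inl (Or.inl h)
      · have : Disjoint X (Subtype.val '' X₁) :=
          Set.disjoint_of_subset Set.subset_union_right hsubYX disjoint_compl_right
        rw [Set.ncard_union_eq this hfinX (Set.toFinite _),
          Set.ncard_image_of_injective _ Subtype.val_injective]
        omega
      · have : Disjoint X (Subtype.val '' X₁) :=
          Set.disjoint_of_subset Set.subset_union_right hsubYX disjoint_compl_right
        rw [Set.ncard_union_eq this hfinX (Set.toFinite _),
          Set.ncard_image_of_injective _ Subtype.val_injective]
        have hle : Fintype.card V / 2 - (X.ncard + X₁.ncard) ≤ Fintype.card V / 2 ^ (w + 1) := by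
          omega
        exact le_max_of_le_left hle

def jvertFintype (a b : ℕ) : (m : ℕ) → Fintype (JVert a b m)
  | 0 => inferInstanceAs (Fintype (Fin b))
  | m+1 =>
    letI := jvertFintype a b m
    inferInstanceAs (Fintype (Fin a ⊕ (JVert a b m ⊕ JVert a b m)))

instance (a b m : ℕ) : Fintype (JVert a b m) := jvertFintype a b m

lemma card_jvert_zero (a b : ℕ) : Fintype.card (JVert a b 0) = b := Fintype.card_fin b

lemma card_jvert_succ (a b m : ℕ) :
    Fintype.card (JVert a b (m+1)) = a + 2 * Fintype.card (JVert a b m) := by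
  have h : Fintype.card (JVert a b (m+1))
      = Fintype.card (Fin a ⊕ (JVert a b m ⊕ JVert a b m)) := rfl
  rw [h, Fintype.card_sum, Fintype.card_sum, Fintype.card_fin]
  ring

lemma jgraph_succ (a b m : ℕ) : JGraph a b (m+1) = SimpleGraph.fromRel (fun u v =>
      match u, v with
      | Sum.inl _, _ => True
      | Sum.inr (Sum.inl x), Sum.inr (Sum.inl y) => (JGraph a b m).Adj x y
      | Sum.inr (Sum.inr x), Sum.inr (Sum.inr y) => (JGraph a b m).Adj x y
      | _, _ => False) := rfl

lemma jadj_inl {a b m : ℕ} (i : Fin a) (z : JVert a b (m+1)) (h : Sum.inl i ≠ z) :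
    (JGraph a b (m+1)).Adj (Sum.inl i) z := by
  refine (SimpleGraph.fromRel_adj ..).mpr ?_
  exact ⟨h, Or.inl trivial⟩

lemma jadj_ll {a b m : ℕ} {x y : JVert a b m} (h : (JGraph a b m).Adj x y) :
    (JGraph a b (m+1)).Adj (Sum.inr (Sum.inl x)) (Sum.inr (Sum.inl y)) := by
  refine (SimpleGraph.fromRel_adj ..).mpr ?_
  refine ⟨?_, Or.inl h⟩
  have : (Sum.inr (Sum.inl x) : Fin a ⊕ (JVert a b m ⊕ JVert a b m)) ≠ Sum.inr (Sum.inl y) := by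
    simp [h.ne]
  exact this

lemma jadj_rr {a b m : ℕ} {x y : JVert a b m} (h : (JGraph a b m).Adj x y) :
    (JGraph a b (m+1)).Adj (Sum.inr (Sum.inr x)) (Sum.inr (Sum.inr y)) := by
  refine (SimpleGraph.fromRel_adj ..).mpr ?_
  refine ⟨?_, Or.inl h⟩
  have : (Sum.inr (Sum.inr x) : Fin a ⊕ (JVert a b m ⊕ JVert a b m)) ≠ Sum.inr (Sum.inr y) := by
    simp [h.ne]
  exact this

lemma jadj_inr_inl_cases {a b m : ℕ} {x : JVert a b m} {u : JVert a b (m+1)}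
    (h : (JGraph a b (m+1)).Adj (Sum.inr (Sum.inl x)) u) :
    (∃ i : Fin a, u = Sum.inl i) ∨ ∃ y, u = Sum.inr (Sum.inl y) ∧ (JGraph a b m).Adj x y := by
  replace h := (SimpleGraph.fromRel_adj ..).mp h
  rcases u with i | (y | y)
  · exact Or.inl ⟨i, rfl⟩
  · refine Or.inr ⟨y, rfl, ?_⟩
    rcases h.2 with h2 | h2
    · exact h2
    · exact h2.symm
  · exfalso
    rcases h.2 with h2 | h2 <;> exact h2

lemma jadj_inr_inr_cases {a b m : ℕ} {x : JVert a b m} {u : JVert a b (m+1)}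
    (h : (JGraph a b (m+1)).Adj (Sum.inr (Sum.inr x)) u) :
    (∃ i : Fin a, u = Sum.inl i) ∨ ∃ y, u = Sum.inr (Sum.inr y) ∧ (JGraph a b m).Adj x y := by
  replace h := (SimpleGraph.fromRel_adj ..).mp h
  rcases u with i | (y | y)
  · exact Or.inl ⟨i, rfl⟩
  · exfalso
    rcases h.2 with h2 | h2 <;> exact h2
  · refine Or.inr ⟨y, rfl, ?_⟩
    rcases h.2 with h2 | h2
    · exact h2
    · exact h2.symm

lemma degree_le_card {W : Type} [Fintype W] (G : SimpleGraph W) (v : W) :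
    G.degree v ≤ Fintype.card W := by
  classical
  exact Finset.card_le_univ _

lemma jdeg_inr_inl {a b m : ℕ} (x : JVert a b m) :
    (JGraph a b (m+1)).degree (Sum.inr (Sum.inl x)) ≤ a + (JGraph a b m).degree x := by
  classical
  have hsub : (JGraph a b (m+1)).neighborFinset (Sum.inr (Sum.inl x)) ⊆
      (Finset.univ.image (Sum.inl : Fin a → JVert a b (m+1))) ∪
        (((JGraph a b m).neighborFinset x).image (fun y => Sum.inr (Sum.inl y))) := by
    intro u hu
    replace hu := (SimpleGraph.mem_neighborFinset ..).mp hu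
    rcases jadj_inr_inl_cases hu with ⟨i, rfl⟩ | ⟨y, rfl, hy⟩
    · exact Finset.mem_union_left _ (Finset.mem_image_of_mem _ (Finset.mem_univ i))
    · exact Finset.mem_union_right _
        (Finset.mem_image_of_mem _ ((SimpleGraph.mem_neighborFinset _ _ _).2 hy))
  refine le_trans (Finset.card_le_card hsub) (le_trans (Finset.card_union_le _ _) ?_)
  gcongr
  · exact (Finset.card_image_le).trans (by simp)
  · exact (Finset.card_image_le)

lemma jdeg_inr_inr {a b m : ℕ} (x : JVert a b m) :
    (JGraph a b (m+1)).degree (Sum.inr (Sum.inr x)) ≤ a + (JGraph a b m).degree x := by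
  classical
  have hsub : (JGraph a b (m+1)).neighborFinset (Sum.inr (Sum.inr x)) ⊆
      (Finset.univ.image (Sum.inl : Fin a → JVert a b (m+1))) ∪
        (((JGraph a b m).neighborFinset x).image (fun y => Sum.inr (Sum.inr y))) := by
    intro u hu
    replace hu := (SimpleGraph.mem_neighborFinset ..).mp hu
    rcases jadj_inr_inr_cases hu with ⟨i, rfl⟩ | ⟨y, rfl, hy⟩
    · exact Finset.mem_union_left _ (Finset.mem_image_of_mem _ (Finset.mem_univ i))
    · exact Finset.mem_union_right _
        (Finset.mem_image_of_mem _ ((SimpleGraph.mem_neighborFinset _ _ _).2 hy))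
  refine le_trans (Finset.card_le_card hsub) (le_trans (Finset.card_union_le _ _) ?_)
  gcongr
  · exact (Finset.card_image_le).trans (by simp)
  · exact (Finset.card_image_le)

lemma jgraph_edge_bound (a b : ℕ) : ∀ m : ℕ,
    (JGraph a b m).edgeFinset.card ≤ Fintype.card (JVert a b m) * (a * m + b) := by
  classical
  intro m
  induction m with
  | zero =>
    have h1 := SimpleGraph.card_edgeFinset_le_card_choose_two (G := JGraph a b 0)
    have h2 : (Fintype.card (JVert a b 0)).choose 2 ≤ b * (a * 0 + b) := by
      rw [card_jvert_zero, Nat.choose_two_right]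
      calc b * (b-1) / 2 ≤ b * (b-1) := Nat.div_le_self _ _
      _ ≤ b * (a * 0 + b) := by gcongr b * ?_; omega
    calc (JGraph a b 0).edgeFinset.card ≤ _ := h1
    _ ≤ b * (a * 0 + b) := h2
    _ = Fintype.card (JVert a b 0) * (a * 0 + b) := by rw [card_jvert_zero]
  | succ m ih =>
    set N := Fintype.card (JVert a b (m+1)) with hN
    set Nm := Fintype.card (JVert a b m) with hNm
    have hNeq : N = a + 2 * Nm := card_jvert_succ a b m
    have hds := SimpleGraph.sum_degrees_eq_twice_card_edges (JGraph a b (m+1))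
    have hdsm := SimpleGraph.sum_degrees_eq_twice_card_edges (JGraph a b m)
    have hsum : ∑ v : JVert a b (m+1), (JGraph a b (m+1)).degree v ≤
        a * N + 2 * (a * Nm + 2 * (JGraph a b m).edgeFinset.card) := by
      have hsplit : ∑ v : JVert a b (m+1), (JGraph a b (m+1)).degree v =
          (∑ i : Fin a, (JGraph a b (m+1)).degree (Sum.inl i)) +
          ((∑ x : JVert a b m, (JGraph a b (m+1)).degree (Sum.inr (Sum.inl x))) +
           (∑ x : JVert a b m, (JGraph a b (m+1)).degree (Sum.inr (Sum.inr x)))) := by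
        rw [show (∑ v : JVert a b (m+1), (JGraph a b (m+1)).degree v) =
            ∑ v : Fin a ⊕ (JVert a b m ⊕ JVert a b m), (JGraph a b (m+1)).degree v from rfl,
          Fintype.sum_sum_type, Fintype.sum_sum_type]
      rw [hsplit]
      have h1 : ∑ i : Fin a, (JGraph a b (m+1)).degree (Sum.inl i) ≤ a * N := by
        calc ∑ i : Fin a, (JGraph a b (m+1)).degree (Sum.inl i)
            ≤ ∑ _i : Fin a, N := Finset.sum_le_sum (fun i _ => degree_le_card _ _)
        _ = a * N := by simp [mul_comm]
      have h2 : ∑ x : JVert a b m, (JGraph a b (m+1)).degree (Sum.inr (Sum.inl x)) ≤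
          a * Nm + 2 * (JGraph a b m).edgeFinset.card := by
        calc ∑ x : JVert a b m, (JGraph a b (m+1)).degree (Sum.inr (Sum.inl x))
            ≤ ∑ x : JVert a b m, (a + (JGraph a b m).degree x) :=
              Finset.sum_le_sum (fun x _ => jdeg_inr_inl x)
        _ = a * Nm + ∑ x : JVert a b m, (JGraph a b m).degree x := by
            rw [Finset.sum_add_distrib]
            simp [mul_comm, hNm]
        _ = a * Nm + 2 * (JGraph a b m).edgeFinset.card := by rw [hdsm]
      have h3 : ∑ x : JVert a b m, (JGraph a b (m+1)).degree (Sum.inr (Sum.inr x)) ≤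
          a * Nm + 2 * (JGraph a b m).edgeFinset.card := by
        calc ∑ x : JVert a b m, (JGraph a b (m+1)).degree (Sum.inr (Sum.inr x))
            ≤ ∑ x : JVert a b m, (a + (JGraph a b m).degree x) :=
              Finset.sum_le_sum (fun x _ => jdeg_inr_inr x)
        _ = a * Nm + ∑ x : JVert a b m, (JGraph a b m).degree x := by
            rw [Finset.sum_add_distrib]
            simp [mul_comm, hNm]
        _ = a * Nm + 2 * (JGraph a b m).edgeFinset.card := by rw [hdsm]
      omega
    rw [hds] at hsum
    have h2 : 2 * Nm ≤ N := by omega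
    have h3 : a * (2 * Nm) ≤ a * N := Nat.mul_le_mul_left a h2
    have h4 : a * (2 * Nm) = 2 * (a * Nm) := by ring
    have hstep : (JGraph a b (m+1)).edgeFinset.card ≤
        a * N + 2 * (JGraph a b m).edgeFinset.card := by omega
    have h5 : (2 * Nm) * (a * m + b) ≤ N * (a * m + b) := Nat.mul_le_mul h2 (le_refl (a*m+b))
    have h6 : (2 * Nm) * (a * m + b) = 2 * (Nm * (a * m + b)) := by ring
    have h7 : N * (a * (m+1) + b) = a * N + N * (a * m + b) := by ring
    omega

def cap (w b : ℕ) : ℕ → ℕ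
  | 0 => b
  | m+1 => 2 * cap w b m - 4 * (cap w b m / 2 ^ w) - 6

lemma two_pow_w_ge (w : ℕ) (hw : 3 ≤ w) : 8 ≤ 2 ^ w := by
  calc (8:ℕ) = 2^3 := rfl
  _ ≤ 2^w := Nat.pow_le_pow_right (by norm_num) hw

lemma cap_lb (w b : ℕ) (hw : 3 ≤ w) (hb : 20 ≤ b) : ∀ m, b ≤ cap w b m := by
  intro m
  induction m with
  | zero => exact le_refl b
  | succ m ih =>
    show b ≤ 2 * cap w b m - 4 * (cap w b m / 2 ^ w) - 6
    set c := cap w b m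
    have h1 : c / 2 ^ w ≤ c / 8 := Nat.div_le_div_left (two_pow_w_ge w hw) (by norm_num)
    have h2 : c / 8 * 8 ≤ c := Nat.div_mul_le_self c 8
    omega

lemma cap_ub (w b : ℕ) : ∀ m, cap w b m ≤ 2 ^ m * b := by
  intro m
  induction m with
  | zero => simp [cap]
  | succ m ih =>
    show 2 * cap w b m - 4 * (cap w b m / 2 ^ w) - 6 ≤ 2 ^ (m+1) * b
    have : 2 ^ (m+1) * b = 2 * (2 ^ m * b) := by ring
    omega

lemma cap_key (w b : ℕ) (hw : 3 ≤ w) (hb : 20 ≤ b) (s m : ℕ) (hs : s ≤ cap w b (m+1)) :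
    s / 2 ≤ cap w b m ∧ (s - s / 2) + max (s / 2 ^ w) 2 ≤ cap w b m := by
  have hcap : cap w b (m+1) = 2 * cap w b m - 4 * (cap w b m / 2 ^ w) - 6 := rfl
  set c := cap w b m with hc
  set t := c / 2 ^ w with ht
  have hcb : 20 ≤ c := le_trans hb (cap_lb w b hw hb m)
  have h1 : t ≤ c / 8 := Nat.div_le_div_left (two_pow_w_ge w hw) (by norm_num)
  have h2 : c / 8 * 8 ≤ c := Nat.div_mul_le_self c 8
  have hpow : 0 < 2 ^ w := Nat.pow_pos (by norm_num)
  have hs2 : s ≤ 2 * c - 4 * t - 6 := by rw [hcap] at hs; omega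
  have hst : s / 2 ^ w ≤ 2 * t + 1 := by
    have hs2c : s ≤ 2 * c := by omega
    have hd1 : s / 2 ^ w ≤ 2 * c / 2 ^ w := Nat.div_le_div_right hs2c
    have hd2 : 2 * c / 2 ^ w < 2 * t + 2 := by
      rw [Nat.div_lt_iff_lt_mul hpow]
      have hmod := Nat.div_add_mod c (2 ^ w)
      rw [← ht] at hmod
      have hmlt : c % 2 ^ w < 2 ^ w := Nat.mod_lt c hpow
      calc 2 * c = 2 * (2 ^ w * t + c % 2 ^ w) := by omega
      _ < (2 * t + 2) * 2 ^ w := by nlinarith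
    omega
  have hmax : max (s / 2 ^ w) 2 ≤ 2 * t + 2 := max_le (by omega) (by omega)
  omega

lemma card_coe_set {V : Type} (S : Set V) [Fintype ↥S] : Fintype.card ↥S = S.ncard := by
  rw [← Nat.card_eq_fintype_card, Nat.card_coe_set_eq]

lemma jv_inl_inj {a b m : ℕ} {i j : Fin a} (h : (Sum.inl i : JVert a b (m+1)) = Sum.inl j) :
    i = j :=
  Sum.inl_injective (h : (Sum.inl i : Fin a ⊕ (JVert a b m ⊕ JVert a b m)) = Sum.inl j)

lemma jv_ll_inj {a b m : ℕ} {x y : JVert a b m}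
    (h : (Sum.inr (Sum.inl x) : JVert a b (m+1)) = Sum.inr (Sum.inl y)) : x = y :=
  Sum.inl_injective (Sum.inr_injective
    (h : (Sum.inr (Sum.inl x) : Fin a ⊕ (JVert a b m ⊕ JVert a b m)) = Sum.inr (Sum.inl y)))

lemma jv_rr_inj {a b m : ℕ} {x y : JVert a b m}
    (h : (Sum.inr (Sum.inr x) : JVert a b (m+1)) = Sum.inr (Sum.inr y)) : x = y :=
  Sum.inr_injective (Sum.inr_injective
    (h : (Sum.inr (Sum.inr x) : Fin a ⊕ (JVert a b m ⊕ JVert a b m)) = Sum.inr (Sum.inr y)))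

lemma jv_inl_ne_inr {a b m : ℕ} {i : Fin a} {z : JVert a b m ⊕ JVert a b m} :
    (Sum.inl i : JVert a b (m+1)) ≠ Sum.inr z := fun h =>
  Sum.inl_ne_inr (h : (Sum.inl i : Fin a ⊕ (JVert a b m ⊕ JVert a b m)) = Sum.inr z)

lemma jv_lr_ne {a b m : ℕ} {x y : JVert a b m} :
    (Sum.inr (Sum.inl x) : JVert a b (m+1)) ≠ Sum.inr (Sum.inr y) := fun h =>
  Sum.inl_ne_inr (Sum.inr_injective
    (h : (Sum.inr (Sum.inl x) : Fin a ⊕ (JVert a b m ⊕ JVert a b m)) = Sum.inr (Sum.inr y)))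

lemma jgraph_zero (a b : ℕ) : JGraph a b 0 = (⊤ : SimpleGraph (JVert a b 0)) := rfl

/-- Main embedding theorem: every forest with at most cap w b m vertices embeds into JGraph. -/
theorem embed (w b : ℕ) (hw : 3 ≤ w) (hb : 4*w + 8 ≤ b) (hb2 : 20 ≤ b) :
    ∀ (m : ℕ) (V : Type) [Fintype V] (F : SimpleGraph V), F.IsAcyclic →
    Fintype.card V ≤ cap w b m →
    ∃ f : F →g JGraph w b m, Function.Injective f := by
  intro m
  induction m with
  | zero =>
    intro V instV F hacyc hcard
    have hcard' : Fintype.card V ≤ Fintype.card (JVert w b 0) := by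
      rw [card_jvert_zero]; exact hcard
    obtain ⟨ι⟩ := Function.Embedding.nonempty_of_card_le hcard'
    refine ⟨⟨fun v => ι v, ?_⟩, fun x y h => ι.injective h⟩
    intro u v hadj
    rw [jgraph_zero, SimpleGraph.top_adj]
    exact fun h => hadj.ne (ι.injective h)
  | succ m ih =>
    intro V instV F hacyc hcard
    by_cases hsm : Fintype.card V ≤ cap w b m
    · obtain ⟨f, hf⟩ := ih V F hacyc hsm
      refine ⟨⟨fun v => Sum.inr (Sum.inl (f v)), ?_⟩, ?_⟩
      · intro u v hadj
        exact jadj_ll (f.map_adj hadj)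
      · intro u v h
        exact hf (jv_ll_inj h)
    · push_neg at hsm
      have hblow : 4*w + 8 ≤ Fintype.card V :=
        le_trans (le_trans hb (cap_lb w b hw hb2 m)) (le_of_lt hsm)
      obtain ⟨A, X, hdis, hA, hcut, hXle, hdef⟩ := split w V F hacyc hblow
      obtain ⟨hkey1, hkey2⟩ := cap_key w b hw hb2 (Fintype.card V) m hcard
      have hfinA : A.Finite := Set.toFinite A
      have hfinX : X.Finite := Set.toFinite X
      have hAX : (A ∪ X).ncard = A.ncard + X.ncard := Set.ncard_union_eq hdis hfinA hfinX
      have hcardY : Fintype.card ↥((A ∪ X)ᶜ) = Fintype.card V - (A.ncard + X.ncard) := by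
        rw [Fintype.card_compl_set, ← hAX, card_coe_set]
      have hcardYle : Fintype.card ↥((A ∪ X)ᶜ) ≤ cap w b m := by omega
      have hcardXle : Fintype.card ↥X ≤ cap w b m := by rw [card_coe_set]; omega
      have hcardA : Fintype.card ↥A ≤ Fintype.card (Fin w) := by
        rw [card_coe_set, Fintype.card_fin]; exact hA
      obtain ⟨fA⟩ := Function.Embedding.nonempty_of_card_le hcardA
      obtain ⟨fX, hfX⟩ := ih ↥X (F.induce X) (isAcyclic_induce hacyc X) hcardXle
      obtain ⟨fY, hfY⟩ := ih ↥((A ∪ X)ᶜ) (F.induce (A ∪ X)ᶜ)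
        (isAcyclic_induce hacyc _) hcardYle
      set f : V → JVert w b (m+1) := fun v =>
        if hvA : v ∈ A then Sum.inl (fA ⟨v, hvA⟩)
        else if hvX : v ∈ X then Sum.inr (Sum.inl (fX ⟨v, hvX⟩))
        else Sum.inr (Sum.inr (fY ⟨v, fun hc => Or.elim hc hvA hvX⟩)) with hfdef
      have hfA' : ∀ v (hv : v ∈ A), f v = Sum.inl (fA ⟨v, hv⟩) := by
        intro v hv; simp only [hfdef]; exact dif_pos hv
      have hfX' : ∀ v (hv : v ∈ X) (hv' : v ∉ A), f v = Sum.inr (Sum.inl (fX ⟨v, hv⟩)) := by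
        intro v hv hv'; simp only [hfdef]; exact (dif_neg hv').trans (dif_pos hv)
      have hfY' : ∀ v (hv : v ∈ (A ∪ X)ᶜ), f v = Sum.inr (Sum.inr (fY ⟨v, hv⟩)) := by
        intro v hv
        have hv1 : v ∉ A := fun h => hv (Or.inl h)
        have hv2 : v ∉ X := fun h => hv (Or.inr h)
        simp only [hfdef]; exact (dif_neg hv1).trans (dif_neg hv2)
      -- f is injective
      have hinj : Function.Injective f := by
        intro u v h
        by_cases huA : u ∈ A <;> by_cases hvA : v ∈ A
        · rw [hfA' u huA, hfA' v hvA] at h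
          exact congrArg Subtype.val (fA.injective (jv_inl_inj h))
        · exfalso
          rw [hfA' u huA] at h
          by_cases hvX : v ∈ X
          · rw [hfX' v hvX hvA] at h; exact jv_inl_ne_inr h
          · rw [hfY' v (fun hc => Or.elim hc hvA hvX)] at h; exact jv_inl_ne_inr h
        · exfalso
          rw [hfA' v hvA] at h
          by_cases huX : u ∈ X
          · rw [hfX' u huX huA] at h; exact jv_inl_ne_inr h.symm
          · rw [hfY' u (fun hc => Or.elim hc huA huX)] at h; exact jv_inl_ne_inr h.symm
        · by_cases huX : u ∈ X <;> by_cases hvX : v ∈ X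
          · rw [hfX' u huX huA, hfX' v hvX hvA] at h
            exact congrArg Subtype.val (hfX (jv_ll_inj h))
          · exfalso
            rw [hfX' u huX huA, hfY' v (fun hc => Or.elim hc hvA hvX)] at h
            exact jv_lr_ne h
          · exfalso
            rw [hfY' u (fun hc => Or.elim hc huA huX), hfX' v hvX hvA] at h
            exact jv_lr_ne h.symm
          · rw [hfY' u (fun hc => Or.elim hc huA huX),
              hfY' v (fun hc => Or.elim hc hvA hvX)] at h
            exact congrArg Subtype.val (hfY (jv_rr_inj h))
      -- f is a hom
      refine ⟨⟨f, ?_⟩, hinj⟩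
      intro u v hadj
      have hne : f u ≠ f v := fun h => hadj.ne (hinj h)
      by_cases huA : u ∈ A
      · rw [hfA' u huA]
        exact jadj_inl _ _ (by rw [← hfA' u huA]; exact hne)
      · by_cases hvA : v ∈ A
        · rw [hfA' v hvA]
          exact (jadj_inl _ (f u) (by rw [← hfA' v hvA]; exact hne.symm)).symm
        · by_cases huX : u ∈ X
          · by_cases hvX : v ∈ X
            · rw [hfX' u huX huA, hfX' v hvX hvA]
              have : (F.induce X).Adj ⟨u, huX⟩ ⟨v, hvX⟩ := hadj
              exact jadj_ll (fX.map_adj this)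
            · exfalso
              rcases hcut u huX v hadj with h | h
              · exact hvX h
              · exact hvA h
          · by_cases hvX : v ∈ X
            · exfalso
              rcases hcut v hvX u hadj.symm with h | h
              · exact huX h
              · exact huA h
            · have huY : u ∈ (A ∪ X)ᶜ := fun hc => Or.elim hc huA huX
              have hvY : v ∈ (A ∪ X)ᶜ := fun hc => Or.elim hc hvA hvX
              rw [hfY' u huY, hfY' v hvY]
              have : (F.induce (A ∪ X)ᶜ).Adj ⟨u, huY⟩ ⟨v, hvY⟩ := hadj
              exact jadj_rr (fY.map_adj this)

lemma card_jvert_le (a b : ℕ) : ∀ m, Fintype.card (JVert a b m) + a ≤ 2^m * (a + b) := by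
  intro m
  induction m with
  | zero => rw [card_jvert_zero]; omega
  | succ m ih =>
    rw [card_jvert_succ]
    have e : 2^(m+1)*(a+b) = 2*(2^m*(a+b)) := by ring
    omega

lemma lin_pow : ∀ k, 10 ≤ k → 22*k + 68 ≤ 2^k := by
  intro k hk
  induction k with
  | zero => omega
  | succ k ih =>
    rcases Nat.lt_or_ge k 10 with h | h
    · have hk10 : k + 1 = 10 := by omega
      rw [hk10]
      norm_num
    · have h1 := ih h
      have h2 : 2^(k+1) = 2^k + 2^k := by ring
      have h3 : 22 ≤ 2^k := by
        calc (22:ℕ) ≤ 22*k + 68 := by omega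
        _ ≤ 2^k := h1
      omega

lemma cap_inv (w b m₀ : ℕ) (hw : 3 ≤ w) (hb20 : 20 ≤ b) (hb18 : 18*m₀ ≤ b)
    (hpw : 8*m₀ ≤ 2^w) :
    ∀ j, j ≤ m₀ → 2^j * b * (2*m₀) ≤ cap w b j * (2*m₀) + j * (2^j * b) := by
  intro j
  induction j with
  | zero => intro _; simp [cap]
  | succ j ih =>
    intro hj
    have ihj := ih (by omega)
    set c := cap w b j with hc
    set t := c / 2^w with ht
    have hcap : cap w b (j+1) = 2*c - 4*t - 6 := rfl
    have hcb : b ≤ c := cap_lb w b hw hb20 j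
    have ht8 : t * 2^w ≤ c := Nat.div_mul_le_self c (2^w)
    have hcub : c ≤ 2^j * b := cap_ub w b j
    have k1 : 8*m₀*t ≤ 2^w * t := Nat.mul_le_mul_right t hpw
    have k2 : 2^w * t ≤ 2^j * b := by rw [mul_comm]; exact le_trans ht8 hcub
    have k3 : 12*m₀ ≤ 2^j * b := by
      have h12 : 12*m₀ ≤ b := by omega
      calc 12*m₀ ≤ b := h12
      _ = 1 * b := (one_mul b).symm
      _ ≤ 2^j * b := Nat.mul_le_mul_right b (Nat.one_le_two_pow)
    have k4 : (4*t+6)*(2*m₀) = 8*m₀*t + 12*m₀ := by ring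
    have k5 : (4*t+6)*(2*m₀) ≤ 2^(j+1) * b := by
      rw [k4]
      have e : 2^(j+1) * b = 2^j*b + 2^j*b := by ring
      omega
    have h46 : 4*t + 6 ≤ 2*c := by
      have h1 : t ≤ c / 8 := Nat.div_le_div_left (two_pow_w_ge w hw) (by norm_num)
      have h2 : c / 8 * 8 ≤ c := Nat.div_mul_le_self c 8
      omega
    have hcapm : cap w b (j+1) * (2*m₀) + (4*t+6)*(2*m₀) = 2*c*(2*m₀) := by
      rw [hcap, ← Nat.add_mul]
      congr 1
      omega
    have h2ih : 2^(j+1) * b * (2*m₀) ≤ 2*c*(2*m₀) + j*(2^(j+1) * b) := by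
      have e1 : 2^(j+1) * b * (2*m₀) = 2 * (2^j * b * (2*m₀)) := by ring
      have e2 : 2*c*(2*m₀) = 2 * (c * (2*m₀)) := by ring
      have e3 : j*(2^(j+1)*b) = 2*(j*(2^j*b)) := by ring
      omega
    have e4 : (j+1)*(2^(j+1)*b) = j*(2^(j+1)*b) + 2^(j+1)*b := by ring
    omega

set_option maxHeartbeats 3000000 in
theorem final : ∃ C : ℝ, 0 < C ∧ ∃ N : ℕ, ∀ n : ℕ, N ≤ n →
    ∃ (V : Type) (U : SimpleGraph V), Finite V ∧
      (U.edgeSet.ncard : ℝ) ≤ C * n * Real.log n * Real.log (Real.log n) ∧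
      ∀ T : SimpleGraph (Fin n), T.IsTree →
        ∃ f : T →g U, Function.Injective f := by
  refine ⟨1000000, by norm_num, 3^100000, ?_⟩
  intro n hn
  set L := Nat.log 2 n with hLdef
  set w := Nat.log 2 (L+2) + 4 with hwdef
  set b := 18*(L+2) + 4*w + 8 with hbdef
  set m := L + 2 - Nat.log 2 b with hmdef
  -- basic nat facts
  have hn1 : 1 ≤ n := le_trans (Nat.one_le_pow _ _ (by norm_num)) hn
  have hL : 100000 ≤ L := by
    apply Nat.le_log_of_pow_le (by norm_num)
    calc (2:ℕ)^100000 ≤ 3^100000 := Nat.pow_le_pow_left (by norm_num) _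
    _ ≤ n := hn
  clear hn
  have h2L : 2^L ≤ n := Nat.pow_log_le_self 2 (by omega)
  have hn2L : n < 2^(L+1) := Nat.lt_pow_succ_log_self (by norm_num) n
  have hw3 : 3 ≤ w := by omega
  have hb4w : 4*w + 8 ≤ b := by omega
  have hb20 : 20 ≤ b := by omega
  have hb18 : 18*(L+2) ≤ b := by omega
  -- 8*(L+2) ≤ 2^w
  have hpw : 8*(L+2) ≤ 2^w := by
    have e1 : 2^w = 2^(Nat.log 2 (L+2)) * 16 := by rw [hwdef, pow_add]; norm_num
    have e2 : L + 2 < 2^(Nat.log 2 (L+2) + 1) := Nat.lt_pow_succ_log_self (by norm_num) _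
    have e3 : 2^(Nat.log 2 (L+2) + 1) = 2^(Nat.log 2 (L+2)) * 2 := by rw [pow_succ]
    omega
  -- b ≤ 2^(L+2)
  have hlogb_lin : Nat.log 2 (L+2) ≤ L + 2 := Nat.log_le_self 2 (L+2)
  have hble : b ≤ 2^(L+2) := by
    have h1 : b ≤ 22*L + 68 := by omega
    have h2 : 22*L + 68 ≤ 2^L := lin_pow L (by omega)
    have h3 : (2:ℕ)^L ≤ 2^(L+2) := Nat.pow_le_pow_right (by norm_num) (by omega)
    omega
  have hlogbL : Nat.log 2 b ≤ L + 2 := by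
    calc Nat.log 2 b ≤ Nat.log 2 (2^(L+2)) := Nat.log_mono_right hble
    _ = L + 2 := Nat.log_pow (by norm_num : 1 < 2) (L+2)
  have hmadd : m + Nat.log 2 b = L + 2 := by rw [hmdef]; omega
  have hpm : 2^m * 2^(Nat.log 2 b) = 2^(L+2) := by rw [← pow_add, hmadd]
  have hblog1 : 2^(Nat.log 2 b) ≤ b := Nat.pow_log_le_self 2 (by omega)
  have hblog2 : b < 2^(Nat.log 2 b) * 2 := by
    have := Nat.lt_pow_succ_log_self (b := 2) (by norm_num) b
    rwa [pow_succ] at this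
  have h2mb_ge : 2^(L+2) ≤ 2^m * b := by
    calc 2^(L+2) = 2^m * 2^(Nat.log 2 b) := hpm.symm
    _ ≤ 2^m * b := Nat.mul_le_mul_left _ hblog1
  have h2mb_le : 2^m * b ≤ 2^(L+3) := by
    calc 2^m * b ≤ 2^m * (2^(Nat.log 2 b) * 2) := Nat.mul_le_mul_left _ (le_of_lt hblog2)
    _ = 2^m * 2^(Nat.log 2 b) * 2 := by ring
    _ = 2^(L+2) * 2 := by rw [hpm]
    _ = 2^(L+3) := (pow_succ 2 (L+2)).symm
  have hmle : m ≤ L + 2 := by omega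
  -- capacity at m covers n
  have hcapn : n ≤ cap w b m := by
    have hinv := cap_inv w b (L+2) hw3 hb20 hb18 hpw m hmle
    -- 2^m*b*(2*(L+2)) ≤ cap*(2*(L+2)) + m*(2^m*b)
    have hmm : m * (2^m*b) ≤ (L+2) * (2^m*b) := Nat.mul_le_mul_right _ hmle
    have e1 : 2^m*b*(2*(L+2)) = (L+2)*(2^m*b) + (L+2)*(2^m*b) := by ring
    have h2cap : (L+2) * (2^m*b) ≤ cap w b m * (2*(L+2)) := by omega
    have e2 : cap w b m * (2*(L+2)) = (cap w b m * 2) * (L+2) := by ring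
    have e3 : (L+2) * (2^m*b) = (2^m*b) * (L+2) := by ring
    have h2cap' : 2^m*b ≤ cap w b m * 2 := by
      have := h2cap
      rw [e2, e3] at this
      exact Nat.le_of_mul_le_mul_right this (by omega)
    have e4 : (2:ℕ)^(L+2) = 2^(L+1) * 2 := by rw [pow_succ]
    have e5 : (2:ℕ)^(L+1) = 2^L * 2 := by rw [pow_succ]
    omega
  refine ⟨JVert w b m, JGraph w b m, Finite.of_fintype _, ?_, ?_⟩
  · -- edge bound
    have hE := jgraph_edge_bound w b m
    have hNv := card_jvert_le w b m
    have hncard : (JGraph w b m).edgeSet.ncard = (JGraph w b m).edgeFinset.card := by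
      rw [SimpleGraph.edgeFinset_card, ← Nat.card_eq_fintype_card, Nat.card_coe_set_eq]
    have t1 : Fintype.card (JVert w b m) ≤ 16 * n := by
      have h1 : Fintype.card (JVert w b m) ≤ 2^m * (w + b) := by omega
      have h2 : 2^m * (w + b) ≤ 2^m * (2*b) := Nat.mul_le_mul_left _ (by omega)
      have e : 2^m * (2*b) = 2 * (2^m * b) := by ring
      have h3 : 2 * (2^m*b) ≤ 2 * 2^(L+3) := by omega
      have e2 : 2 * 2^(L+3) = 16 * 2^L := by rw [pow_succ 2 (L+2), pow_succ 2 (L+1), pow_succ 2 L]; ring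
      have h4 : 16 * 2^L ≤ 16 * n := by omega
      omega
    have t2 : w * m + b ≤ 40 * ((L+2) * w) := by
      have h1 : w * m ≤ w * (L+2) := Nat.mul_le_mul_left _ hmle
      have h2 : b ≤ 30 * ((L+2)*w) := by
        have h3 : 18*(L+2) ≤ 18*((L+2)*w) := by
          have : (L+2) ≤ (L+2)*w := Nat.le_mul_of_pos_right _ (by omega)
          omega
        have h4 : 4*w + 8 ≤ 12*((L+2)*w) := by
          have : w ≤ (L+2)*w := Nat.le_mul_of_pos_left _ (by omega)
          omega
        omega
      have e : w * (L+2) = (L+2) * w := by ring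
      omega
    have hEfinal : (JGraph w b m).edgeSet.ncard ≤ 640 * (n * ((L+2) * w)) := by
      rw [hncard]
      calc (JGraph w b m).edgeFinset.card ≤ Fintype.card (JVert w b m) * (w * m + b) := hE
      _ ≤ (16*n) * (40 * ((L+2)*w)) := Nat.mul_le_mul t1 t2
      _ = 640 * (n * ((L+2)*w)) := by ring
    -- now the real-number estimates
    clear_value L w b m
    have hlog2 : (1/2 : ℝ) ≤ Real.log 2 := by
      rw [Real.le_log_iff_exp_le (by norm_num)]
      have h1 : Real.exp (1/2 : ℝ) ^ 2 = Real.exp 1 := by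
        rw [← Real.exp_nat_mul]; norm_num
      nlinarith [Real.exp_pos (1/2:ℝ), Real.exp_one_lt_d9]
    have hLbig : (100000:ℝ) ≤ (L:ℝ) := by exact_mod_cast hL
    have h2Lr : (L:ℝ) * Real.log 2 ≤ Real.log n := by
      have h1 : ((2:ℝ))^L ≤ (n:ℝ) := by exact_mod_cast h2L
      have := Real.log_le_log (by positivity) h1
      rwa [Real.log_pow] at this
    have hlogn : (50000 : ℝ) ≤ Real.log n := by nlinarith
    have hLreal : (L : ℝ) + 2 ≤ 3 * Real.log n := by nlinarith
    have hlnln : (9:ℝ) ≤ Real.log (Real.log n) := by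
      have h1 : ((3:ℝ))^(9:ℕ) ≤ Real.log n := by
        have : ((3:ℝ))^(9:ℕ) = 19683 := by norm_num
        nlinarith
      have h2 := Real.log_le_log (by positivity) h1
      rw [Real.log_pow] at h2
      push_cast at h2
      have h3 : (1:ℝ) ≤ Real.log 3 := by
        rw [Real.le_log_iff_exp_le (by norm_num)]
        calc Real.exp 1 ≤ 2.7182818286 := le_of_lt Real.exp_one_lt_d9
        _ ≤ 3 := by norm_num
      nlinarith
    have hwreal : (w : ℝ) ≤ 3 * Real.log (Real.log n) := by
      have hlogw : ((Nat.log 2 (L+2) : ℕ) : ℝ) * Real.log 2 ≤ Real.log (L+2) := by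
        have h1 : ((2:ℝ))^(Nat.log 2 (L+2)) ≤ ((L:ℝ)+2) := by
          have := Nat.pow_log_le_self 2 (show L+2 ≠ 0 by omega)
          exact_mod_cast this
        have := Real.log_le_log (by positivity) h1
        rwa [Real.log_pow] at this
      have h2 : Real.log ((L:ℝ)+2) ≤ Real.log (3 * Real.log n) :=
        Real.log_le_log (by positivity) hLreal
      have h3 : Real.log (3 * Real.log n) = Real.log 3 + Real.log (Real.log n) := by
        rw [Real.log_mul (by norm_num) (by nlinarith)]
      have h4 : Real.log 3 ≤ 2 := by
        rw [Real.log_le_iff_le_exp (by norm_num)]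
        have e1 : Real.exp (2:ℝ) = Real.exp 1 ^ 2 := by
          rw [← Real.exp_nat_mul]; norm_num
        nlinarith [Real.exp_one_gt_d9]
      have h5 : ((Nat.log 2 (L+2) : ℕ) : ℝ) ≤ 2 * Real.log ((L:ℝ)+2) := by nlinarith
      have hw' : (w:ℝ) = ((Nat.log 2 (L+2) : ℕ) : ℝ) + 4 := by
        rw [hwdef]; push_cast; ring
      rw [hw']
      nlinarith
    calc ((JGraph w b m).edgeSet.ncard : ℝ) ≤ 640 * ((n:ℝ) * (((L:ℝ)+2) * (w:ℝ))) := by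
          have := hEfinal
          push_cast
          exact_mod_cast Nat.cast_le.2 this
    _ ≤ 640 * ((n:ℝ) * ((3 * Real.log n) * (3 * Real.log (Real.log n)))) := by
        have hn0 : (0:ℝ) ≤ (n:ℝ) := by positivity
        have hw0 : (0:ℝ) ≤ (w:ℝ) := by positivity
        have hL0 : (0:ℝ) ≤ (L:ℝ)+2 := by positivity
        have hll : (0:ℝ) ≤ Real.log (Real.log n) := by nlinarith
        have hl : (0:ℝ) ≤ Real.log n := by nlinarith
        have := mul_le_mul hLreal hwreal hw0 (by positivity)
        nlinarith
    _ ≤ 1000000 * (n:ℝ) * Real.log n * Real.log (Real.log n) := by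
        have hl : (0:ℝ) ≤ Real.log n := by nlinarith
        have hll : (0:ℝ) ≤ Real.log (Real.log n) := by nlinarith
        have hn0 : (0:ℝ) ≤ (n:ℝ) := by positivity
        nlinarith [mul_nonneg (mul_nonneg hn0 hl) hll]
  · intro T hT
    apply embed w b hw3 hb4w hb20 m (Fin n) T hT.2
    rw [Fintype.card_fin]
    exact hcapn

end S9
end UniversalTreeGraph

theorem statement_9 : ∃ C : ℝ, 0 < C ∧ ∃ N : ℕ, ∀ n : ℕ, N ≤ n →
    ∃ (V : Type) (U : SimpleGraph V), Finite V ∧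
      (U.edgeSet.ncard : ℝ) ≤ C * n * Real.log n * Real.log (Real.log n) ∧
      ∀ T : SimpleGraph (Fin n), T.IsTree → Contains U T := by
  obtain ⟨C, hC, N, h⟩ := S9.final
  refine ⟨C, hC, N, fun n hn => ?_⟩
  obtain ⟨V, U, hfin, hedge, htree⟩ := h n hn
  exact ⟨V, U, hfin, hedge, fun T hT => htree T hT⟩
end
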